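/- arXiv:2403.09151 — 5 statements merged into one kernel-verified Lean document; each statement's English description precedes it below -/
import Mathlib

section
/- For every x⁰ ∈ X_M and every control u, the SEIR trajectory satisfies x(t; x⁰, u) ∈ X_M for all t ≥ 0; moreover x₂(t) → 0 and x₃(t) → 0 as t → ∞, and x₁(t) converges to a limit x₁^∞ with 0 ≤ x₁^∞ ≤ γ_nom/β_nom. -/
/-!
The SEIR field is quasi-monotone with respect to the orthant order: when one coordinate of `-x`,
or of `x - (0, γnom Imax / η, Imax)`, is positive, its derivative is at most a constant times the
largest such coordinate. A continuous-induction argument on the integral equations therefore keeps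
the state nonnegative, and then keeps `x₂ ≤ γnom Imax / η` and `x₃ ≤ Imax` as long as
`βnom x₁ ≤ γnom`, which persists because `x₁` is nonincreasing. The nonnegative quantities `x₁`,
`x₁ + x₂` and `x₁ + x₂ + x₃` have derivatives `-u₁ x₁ x₃`, `-η x₂` and `-u₂ x₃`; so they converge,
`x₂` and `x₃` have limits, and these limits vanish because `x₂` and `x₃` are integrable on
`[0, ∞)`.
-/

open MeasureTheory Set Filter Topology
open scoped ENNReal

noncomputable section

/-- A valid control: Lebesgue-measurable with values in
`U = [βmin, βnom] × [γnom, γmax]` for all `t ≥ 0`. -/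
def IsCtrl (βmin βnom γnom γmax : ℝ) (u₁ u₂ : ℝ → ℝ) : Prop :=
  Measurable u₁ ∧ Measurable u₂ ∧
    ∀ t : ℝ, 0 ≤ t → u₁ t ∈ Icc βmin βnom ∧ u₂ t ∈ Icc γnom γmax

/-- The SEIR trajectory: a (locally absolutely continuous) solution of the SEIR
system, written in integral form. -/
def IsTraj (η : ℝ) (u₁ u₂ x₁ x₂ x₃ : ℝ → ℝ) : Prop :=
  ContinuousOn x₁ (Ici 0) ∧ ContinuousOn x₂ (Ici 0) ∧ ContinuousOn x₃ (Ici 0) ∧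
    (∀ t : ℝ, 0 ≤ t → x₁ t = x₁ 0 + ∫ s in (0:ℝ)..t, -(u₁ s * x₁ s * x₃ s)) ∧
    (∀ t : ℝ, 0 ≤ t → x₂ t = x₂ 0 + ∫ s in (0:ℝ)..t, (u₁ s * x₁ s * x₃ s - η * x₂ s)) ∧
    (∀ t : ℝ, 0 ≤ t → x₃ t = x₃ 0 + ∫ s in (0:ℝ)..t, (η * x₂ s - u₂ s * x₃ s))

/-- The state constraint set `X = {x ∈ [0,1]³ : x₃ ≤ Imax ∧ x₁ + x₂ + x₃ ≤ 1}`. -/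
def InX (Imax a b c : ℝ) : Prop :=
  a ∈ Icc (0:ℝ) 1 ∧ b ∈ Icc (0:ℝ) 1 ∧ c ∈ Icc (0:ℝ) 1 ∧ c ≤ Imax ∧ a + b + c ≤ 1

/-- The invariant box `X_M = {x ∈ X : x₁ ≤ γnom/βnom ∧ x₂ ≤ γnom Imax / η}`. -/
def InXM (η βnom γnom Imax a b c : ℝ) : Prop :=
  InX Imax a b c ∧ a ≤ γnom / βnom ∧ b ≤ γnom * Imax / η

/-- The admissible set `A`: states in `X` from which some control keeps the
trajectory in `X` for all `t ≥ 0`. -/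
def InA (η βmin βnom γnom γmax Imax a b c : ℝ) : Prop :=
  InX Imax a b c ∧
    ∃ u₁ u₂ x₁ x₂ x₃ : ℝ → ℝ,
      IsCtrl βmin βnom γnom γmax u₁ u₂ ∧ IsTraj η u₁ u₂ x₁ x₂ x₃ ∧
        x₁ 0 = a ∧ x₂ 0 = b ∧ x₃ 0 = c ∧
        ∀ t : ℝ, 0 ≤ t → InX Imax (x₁ t) (x₂ t) (x₃ t)

/-- The set `A' = A \ {x ∈ A : x₁ ≥ γnom/βnom ∧ x₃(x₂+x₃) < ε}`. -/
def InA' (η βmin βnom γnom γmax Imax ε a b c : ℝ) : Prop :=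
  InA η βmin βnom γnom γmax Imax a b c ∧ ¬(γnom / βnom ≤ a ∧ c * (b + c) < ε)

/-- The quadratic stage cost `ℓ(x,u)`. -/
def stageCost (lam βnom γnom b c v₁ v₂ : ℝ) : ℝ :=
  lam * (b ^ 2 + c ^ 2) + (1 - lam) * ((v₁ - βnom) ^ 2 + (v₂ - γnom) ^ 2)

/-- The finite-horizon value function `V_T(x⁰)` (with value `∞` if infeasible). -/
def Vfin (η βmin βnom γnom γmax Imax lam T a b c : ℝ) : ℝ≥0∞ :=
  sInf { J : ℝ≥0∞ | ∃ u₁ u₂ x₁ x₂ x₃ : ℝ → ℝ,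
    IsCtrl βmin βnom γnom γmax u₁ u₂ ∧ IsTraj η u₁ u₂ x₁ x₂ x₃ ∧
      x₁ 0 = a ∧ x₂ 0 = b ∧ x₃ 0 = c ∧
      (∀ t ∈ Icc (0:ℝ) T, InX Imax (x₁ t) (x₂ t) (x₃ t)) ∧
      J = ∫⁻ s in Ioc (0:ℝ) T,
            ENNReal.ofReal (stageCost lam βnom γnom (x₂ s) (x₃ s) (u₁ s) (u₂ s)) }

/-- The infinite-horizon value function `V_∞(x⁰)` (with value `∞` if infeasible). -/
def Vinf (η βmin βnom γnom γmax Imax lam a b c : ℝ) : ℝ≥0∞ :=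
  sInf { J : ℝ≥0∞ | ∃ u₁ u₂ x₁ x₂ x₃ : ℝ → ℝ,
    IsCtrl βmin βnom γnom γmax u₁ u₂ ∧ IsTraj η u₁ u₂ x₁ x₂ x₃ ∧
      x₁ 0 = a ∧ x₂ 0 = b ∧ x₃ 0 = c ∧
      (∀ t : ℝ, 0 ≤ t → InX Imax (x₁ t) (x₂ t) (x₃ t)) ∧
      J = ∫⁻ s in Ioi (0:ℝ),
            ENNReal.ofReal (stageCost lam βnom γnom (x₂ s) (x₃ s) (u₁ s) (u₂ s)) }

lemma AntitoneOn.exists_tendsto_atTop {f : ℝ → ℝ} {a m : ℝ} (hf : AntitoneOn f (Ici a))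
    (hm : ∀ t, a ≤ t → m ≤ f t) : ∃ L, Tendsto f atTop (𝓝 L) := by
  have hanti : Antitone fun t => f (max t a) := fun s t hst =>
    hf (le_max_right s a) (le_max_right t a) (max_le_max hst le_rfl)
  refine ⟨_, (tendsto_atTop_ciInf hanti ⟨m, ?_⟩).congr' ?_⟩
  · rintro _ ⟨t, rfl⟩
    exact hm _ (le_max_right t a)
  · filter_upwards [eventually_ge_atTop a] with t ht
    rw [max_eq_left ht]

lemma eq_zero_of_tendsto_of_integrableOn_Ioi {E : Type*} [NormedAddCommGroup E] {h : ℝ → E}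
    {a : ℝ} {L : E} (hi : IntegrableOn h (Ioi a)) (hL : Tendsto h atTop (𝓝 L)) : L = 0 := by
  refine IntegrableAtFilter.eq_zero_of_tendsto ⟨Ioi a, Ioi_mem_atTop a, hi⟩ (fun s hs => ?_) hL
  obtain ⟨b, hb⟩ := mem_atTop_sets.1 hs
  rw [← top_le_iff, ← Real.volume_Ici (a := b)]
  exact measure_mono fun t ht => hb t ht

lemma intervalIntegrable_of_measurable_of_mem_Icc {u : ℝ → ℝ} {m M T : ℝ} (hu : Measurable u)
    (hb : ∀ t, 0 ≤ t → u t ∈ Icc m M) (hT : 0 ≤ T) : IntervalIntegrable u volume 0 T := by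
  refine (intervalIntegrable_iff_integrableOn_Ioc_of_le hT).2 <|
    IntegrableOn.of_bound measure_Ioc_lt_top hu.aestronglyMeasurable (max |m| |M|) <|
      ae_restrict_of_forall_mem measurableSet_Ioc fun t ht => ?_
  rw [Real.norm_eq_abs]
  exact abs_le_max_abs_abs (hb t ht.1.le).1 (hb t ht.1.le).2

structure IsPrimitiveOnIci (f g : ℝ → ℝ) : Prop where
  intervalIntegrable : ∀ t, 0 ≤ t → IntervalIntegrable g volume 0 t
  eq_add_integral : ∀ t, 0 ≤ t → f t = f 0 + ∫ s in (0:ℝ)..t, g s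

namespace IsPrimitiveOnIci

variable {f f' g g' k : ℝ → ℝ}

lemma add (hf : IsPrimitiveOnIci f g) (hf' : IsPrimitiveOnIci f' g') :
    IsPrimitiveOnIci (fun t => f t + f' t) (fun s => g s + g' s) where
  intervalIntegrable t ht := (hf.intervalIntegrable t ht).add (hf'.intervalIntegrable t ht)
  eq_add_integral t ht := by
    linarith [hf.eq_add_integral t ht, hf'.eq_add_integral t ht,
      intervalIntegral.integral_add (hf.intervalIntegrable t ht) (hf'.intervalIntegrable t ht)]

lemma neg (hf : IsPrimitiveOnIci f g) : IsPrimitiveOnIci (fun t => -f t) (fun s => -g s) where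
  intervalIntegrable t ht := (hf.intervalIntegrable t ht).neg
  eq_add_integral t ht := by
    rw [intervalIntegral.integral_neg, hf.eq_add_integral t ht]
    ring

lemma sub_const (hf : IsPrimitiveOnIci f g) (c : ℝ) : IsPrimitiveOnIci (fun t => f t - c) g where
  intervalIntegrable := hf.intervalIntegrable
  eq_add_integral t ht := by linarith [hf.eq_add_integral t ht]

lemma congr_integrand (hf : IsPrimitiveOnIci f g) (h : ∀ s, g s = g' s) :
    IsPrimitiveOnIci f g' :=
  funext h ▸ hf

lemma intervalIntegrable_of_le (hf : IsPrimitiveOnIci f g) {s t : ℝ} (hs : 0 ≤ s)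
    (hst : s ≤ t) : IntervalIntegrable g volume s t :=
  (hf.intervalIntegrable t (hs.trans hst)).mono_set <| by
    rw [uIcc_of_le hst, uIcc_of_le (hs.trans hst)]
    exact Icc_subset_Icc hs le_rfl

lemma eq_add_integral_of_le (hf : IsPrimitiveOnIci f g) {s t : ℝ} (hs : 0 ≤ s) (hst : s ≤ t) :
    f t = f s + ∫ r in s..t, g r := by
  linarith [hf.eq_add_integral s hs, hf.eq_add_integral t (hs.trans hst),
    intervalIntegral.integral_add_adjacent_intervals (hf.intervalIntegrable s hs)
      (hf.intervalIntegrable_of_le hs hst)]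

lemma antitoneOn (hf : IsPrimitiveOnIci f g) (hg : ∀ s, 0 ≤ s → g s ≤ 0) :
    AntitoneOn f (Ici 0) := by
  intro s hs t _ hst
  have : ∫ r in s..t, g r ≤ ∫ r in s..t, (0 : ℝ) :=
    intervalIntegral.integral_mono_on hst (hf.intervalIntegrable_of_le hs hst)
      intervalIntegrable_const fun r hr => hg r (le_trans hs hr.1)
  rw [hf.eq_add_integral_of_le hs hst]
  simpa using this

-- Integrate from the last zero of `f` before `t`.
lemma le_sub_mul_of_pos_imp_le (hf : IsPrimitiveOnIci f g) (hc : ContinuousOn f (Ici 0))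
    {t₀ t C : ℝ} (ht₀ : 0 ≤ t₀) (ht : t₀ ≤ t) (hC : 0 ≤ C) (hft₀ : f t₀ ≤ 0)
    (hg : ∀ s ∈ Icc t₀ t, 0 < f s → g s ≤ C) : f t ≤ (t - t₀) * C := by
  set Z := Icc t₀ t ∩ f ⁻¹' Iic 0
  have hZ : IsClosed Z :=
    (hc.mono fun s hs => ht₀.trans hs.1).preimage_isClosed_of_isClosed isClosed_Icc isClosed_Iic
  have hZbdd : BddAbove Z := ⟨t, fun s hs => hs.1.2⟩
  obtain ⟨⟨hσ₀, hσt⟩, hfσ⟩ : sSup Z ∈ Z := hZ.csSup_mem ⟨t₀, ⟨le_rfl, ht⟩, hft₀⟩ hZbdd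
  set σ := sSup Z
  have hpos : ∀ s ∈ Ioo σ t, 0 < f s := by
    intro s hs
    by_contra! h
    exact hs.1.not_ge (le_csSup hZbdd ⟨⟨hσ₀.trans hs.1.le, hs.2.le⟩, h⟩)
  calc f t = f σ + ∫ r in σ..t, g r := hf.eq_add_integral_of_le (ht₀.trans hσ₀) hσt
    _ ≤ 0 + ∫ _ in σ..t, C := by
        gcongr
        · exact hfσ
        · exact intervalIntegral.integral_mono_on_of_le_Ioo hσt
            (hf.intervalIntegrable_of_le (ht₀.trans hσ₀) hσt) intervalIntegrable_const
            fun s hs => hg s ⟨hσ₀.trans hs.1.le, hs.2.le⟩ (hpos s hs)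
    _ ≤ (t - t₀) * C := by
        rw [intervalIntegral.integral_const, smul_eq_mul, zero_add]
        gcongr

lemma integrableOn_Ioi (hf : IsPrimitiveOnIci f fun s => -k s) (hk : ∀ s, 0 ≤ s → 0 ≤ k s)
    (hf₀ : ∀ t, 0 ≤ t → 0 ≤ f t) : IntegrableOn k (Ioi 0) := by
  have hki : ∀ t, 0 ≤ t → IntervalIntegrable k volume 0 t := fun t ht => by
    simpa [Pi.neg_def] using (hf.intervalIntegrable t ht).neg
  refine integrableOn_Ioi_of_intervalIntegral_norm_bounded (f 0) 0 (fun t => ?_) tendsto_id ?_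
  · rcases le_or_gt 0 t with ht | ht
    · exact (intervalIntegrable_iff_integrableOn_Ioc_of_le ht).1 (hki t ht)
    · simp [Ioc_eq_empty_of_le ht.le]
  · filter_upwards [eventually_ge_atTop 0] with t ht
    have hnorm : ∫ s in (0:ℝ)..t, ‖k s‖ = ∫ s in (0:ℝ)..t, k s :=
      intervalIntegral.integral_congr fun s hs =>
        Real.norm_of_nonneg (hk s (by rw [uIcc_of_le ht] at hs; exact hs.1))
    have := hf.eq_add_integral t ht
    rw [intervalIntegral.integral_neg] at this
    simp only [id, hnorm]
    linarith [hf₀ t ht]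

lemma exists_tendsto_atTop (hf : IsPrimitiveOnIci f fun s => -k s) (hk : ∀ s, 0 ≤ s → 0 ≤ k s)
    (hf₀ : ∀ t, 0 ≤ t → 0 ≤ f t) : ∃ L, Tendsto f atTop (𝓝 L) :=
  (hf.antitoneOn fun s hs => neg_nonpos.2 (hk s hs)).exists_tendsto_atTop hf₀

end IsPrimitiveOnIci

section QuasiMonotone

variable {ι : Type*} [Finite ι] {f g : ι → ℝ → ℝ}

-- With `μ` the largest value of the `f i` on the window, `le_sub_mul_of_pos_imp_le` gives
-- `μ ≤ δ K μ`, hence `μ = 0`.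
lemma nonpos_on_Icc_of_isPrimitiveOnIci (hc : ∀ i, ContinuousOn (f i) (Ici 0))
    (hf : ∀ i, IsPrimitiveOnIci (f i) (g i)) {x δ K : ℝ} (hx : 0 ≤ x) (hδ : 0 ≤ δ) (hK : 0 ≤ K)
    (hδK : δ * K < 1) (hfx : ∀ i, f i x ≤ 0)
    (hg : ∀ i, ∀ s ∈ Icc x (x + δ), ∀ μ, 0 ≤ μ → (∀ j, f j s ≤ μ) → 0 < f i s → g i s ≤ K * μ) :
    ∀ i, ∀ s ∈ Icc x (x + δ), f i s ≤ 0 := by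
  set V := insert 0 (⋃ i ∈ (univ : Set ι), f i '' Icc x (x + δ))
  have hV : BddAbove V := BddAbove.insert 0 <| finite_univ.bddAbove_biUnion.2 fun i _ =>
    (isCompact_Icc.image_of_continuousOn ((hc i).mono fun s hs => hx.trans hs.1)).bddAbove
  set μ := sSup V
  have hμ : 0 ≤ μ := le_csSup hV (mem_insert 0 _)
  have hfμ : ∀ i, ∀ s ∈ Icc x (x + δ), f i s ≤ μ := fun i s hs =>
    le_csSup hV (mem_insert_of_mem _ (mem_biUnion (mem_univ i) (mem_image_of_mem _ hs)))
  have hfδ : ∀ i, ∀ s ∈ Icc x (x + δ), f i s ≤ δ * (K * μ) := fun i s hs =>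
    calc f i s ≤ (s - x) * (K * μ) :=
          (hf i).le_sub_mul_of_pos_imp_le (hc i) hx hs.1 (mul_nonneg hK hμ) (hfx i)
            fun r hr => hg i r ⟨hr.1, hr.2.trans hs.2⟩ μ hμ fun j => hfμ j r ⟨hr.1, hr.2.trans hs.2⟩
      _ ≤ δ * (K * μ) := by gcongr; linarith [hs.2]
  have hμδ : μ ≤ δ * K * μ := by
    refine csSup_le ⟨0, mem_insert 0 _⟩ ?_
    rintro _ (rfl | hv)
    · positivity
    · obtain ⟨i, -, s, hs, rfl⟩ := mem_iUnion₂.1 hv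
      linarith [hfδ i s hs]
  have hμ0 : μ ≤ 0 := by nlinarith
  exact fun i s hs => (hfμ i s hs).trans hμ0

theorem forall_nonpos_of_isPrimitiveOnIci (hc : ∀ i, ContinuousOn (f i) (Ici 0))
    (hf : ∀ i, IsPrimitiveOnIci (f i) (g i)) (h₀ : ∀ i, f i 0 ≤ 0)
    (hg : ∀ T, ∃ K, 0 ≤ K ∧ ∀ i, ∀ s ∈ Icc 0 T, ∀ μ, 0 ≤ μ → (∀ j, f j s ≤ μ) → 0 < f i s →
      g i s ≤ K * μ) :
    ∀ t, 0 ≤ t → ∀ i, f i t ≤ 0 := by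
  intro t ht
  obtain ⟨K, hK, hgK⟩ := hg t
  set F : ℝ → ι → ℝ := fun s i => f i s
  have hF : IsClosed (F ⁻¹' Iic 0 ∩ Icc 0 t) := by
    rw [inter_comm]
    exact (continuousOn_pi.2 fun i => (hc i).mono fun s hs => hs.1).preimage_isClosed_of_isClosed
      isClosed_Icc isClosed_Iic
  refine hF.mem_of_ge_of_forall_exists_gt h₀ ht ?_
  rintro x ⟨hxF, hx₀, hxt⟩
  set δ := min (t - x) (K + 1)⁻¹
  have hδ : 0 < δ := lt_min (sub_pos.2 hxt) (by positivity)
  have hδK : δ * K < 1 :=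
    calc δ * K < δ * (K + 1) := by gcongr; linarith
      _ ≤ (K + 1)⁻¹ * (K + 1) := by gcongr; exact min_le_right _ _
      _ = 1 := inv_mul_cancel₀ (by positivity)
  have hxt' : x + δ ≤ t := by linarith [min_le_left (t - x) (K + 1)⁻¹]
  refine ⟨x + δ, fun i => nonpos_on_Icc_of_isPrimitiveOnIci hc hf hx₀ hδ.le hK hδK hxF
    (fun i s hs => hgK i s ⟨hx₀.trans hs.1, hs.2.trans hxt'⟩) i (x + δ) ⟨by linarith, le_rfl⟩,
    by linarith, hxt'⟩

end QuasiMonotone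

lemma quasiMonotone_neg_seir {u₁ u₂ η β M μ y₁ y₂ y₃ : ℝ} (hu₁ : u₁ ∈ Icc 0 β) (hu₂ : 0 ≤ u₂)
    (hη : 0 ≤ η) (hy₁ : y₁ ≤ M) (hy₃ : |y₃| ≤ M) (hμ : 0 ≤ μ) (h₁ : -y₁ ≤ μ) (h₂ : -y₂ ≤ μ)
    (h₃ : -y₃ ≤ μ) :
    (0 < -y₁ → u₁ * y₁ * y₃ ≤ (β * M + η) * μ) ∧
      (0 < -y₂ → -(u₁ * y₁ * y₃ - η * y₂) ≤ (β * M + η) * μ) ∧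
      (0 < -y₃ → -(η * y₂ - u₂ * y₃) ≤ (β * M + η) * μ) := by
  obtain ⟨hu₁₀, hu₁β⟩ := hu₁
  obtain ⟨hy₃l, hy₃u⟩ := abs_le.1 hy₃
  have hM : 0 ≤ M := (abs_nonneg _).trans hy₃
  have hβu₁ : 0 ≤ (β - u₁) * M * μ := mul_nonneg (mul_nonneg (by linarith) hM) hμ
  refine ⟨fun hpos => ?_, fun hpos => ?_, fun hpos => ?_⟩
  · nlinarith [mul_nonneg (mul_nonneg hu₁₀ hpos.le) (by linarith : 0 ≤ M + y₃),
      mul_nonneg (mul_nonneg hu₁₀ hM) (by linarith : 0 ≤ μ + y₁), mul_nonneg hη hμ]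
  · have hprod : -(M * μ) ≤ y₁ * y₃ := by
      rcases le_total 0 y₁ with h | h
      · nlinarith [mul_nonneg h (by linarith : 0 ≤ μ + y₃)]
      · nlinarith [mul_nonneg (neg_nonneg.2 h) (by linarith : 0 ≤ M - y₃)]
    nlinarith [mul_nonneg hu₁₀ (by linarith : 0 ≤ y₁ * y₃ + M * μ), mul_nonneg hη hpos.le,
      mul_nonneg hη hμ]
  · nlinarith [mul_nonneg hu₂ hpos.le, mul_nonneg hη (by linarith : 0 ≤ μ + y₂),
      mul_nonneg (mul_nonneg hu₁₀ hM) hμ]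

lemma quasiMonotone_seir_sub {p u₂ η γ I μ y₂ y₃ : ℝ} (hη : 0 < η) (hγ : 0 ≤ γ) (hp : p ≤ γ)
    (hu₂ : γ ≤ u₂) (hy₃ : 0 ≤ y₃) (hμ : 0 ≤ μ) (h₂ : y₂ - γ * I / η ≤ μ) (h₃ : y₃ - I ≤ μ) :
    (0 < y₂ - γ * I / η → p * y₃ - η * y₂ ≤ (γ + η) * μ) ∧
      (0 < y₃ - I → η * y₂ - u₂ * y₃ ≤ (γ + η) * μ) := by
  have hB : η * (γ * I / η) = γ * I := mul_div_cancel₀ _ hη.ne'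
  refine ⟨fun hpos => ?_, fun hpos => ?_⟩
  · nlinarith [mul_le_mul_of_nonneg_right hp hy₃, mul_nonneg hη.le hpos.le, mul_nonneg hη.le hμ]
  · nlinarith [mul_le_mul_of_nonneg_right hu₂ hy₃, mul_nonneg hη.le (sub_nonneg.2 h₂),
      mul_nonneg hγ hpos.le, mul_nonneg hγ hμ]

lemma inX_of_nonneg {I a b c : ℝ} (ha : 0 ≤ a) (hb : 0 ≤ b) (hc : 0 ≤ c) (hcI : c ≤ I)
    (habc : a + b + c ≤ 1) : InX I a b c :=
  ⟨⟨ha, by linarith⟩, ⟨hb, by linarith⟩, ⟨hc, by linarith⟩, hcI, habc⟩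

namespace IsTraj

variable {η βmin βnom γnom γmax : ℝ} {u₁ u₂ x₁ x₂ x₃ : ℝ → ℝ}

lemma isPrimitiveOnIci (hu : IsCtrl βmin βnom γnom γmax u₁ u₂) (hx : IsTraj η u₁ u₂ x₁ x₂ x₃) :
    IsPrimitiveOnIci x₁ (fun s => -(u₁ s * x₁ s * x₃ s)) ∧
      IsPrimitiveOnIci x₂ (fun s => u₁ s * x₁ s * x₃ s - η * x₂ s) ∧
      IsPrimitiveOnIci x₃ (fun s => η * x₂ s - u₂ s * x₃ s) := by
  obtain ⟨hu₁, hu₂, hU⟩ := hu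
  obtain ⟨hc₁, hc₂, hc₃, h₁, h₂, h₃⟩ := hx
  have hsub : ∀ T : ℝ, 0 ≤ T → uIcc 0 T ⊆ Ici 0 := fun T hT => by
    rw [uIcc_of_le hT]
    exact Icc_subset_Ici_self
  have hinc : ∀ T, 0 ≤ T → IntervalIntegrable (fun s => u₁ s * x₁ s * x₃ s) volume 0 T :=
    fun T hT => by
      simpa only [mul_assoc, Pi.mul_apply] using
        (intervalIntegrable_of_measurable_of_mem_Icc hu₁ (fun t ht => (hU t ht).1)
          hT).mul_continuousOn ((hc₁.mul hc₃).mono (hsub T hT))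
  have hrem : ∀ T, 0 ≤ T → IntervalIntegrable (fun s => u₂ s * x₃ s) volume 0 T := fun T hT =>
    (intervalIntegrable_of_measurable_of_mem_Icc hu₂ (fun t ht => (hU t ht).2)
      hT).mul_continuousOn (hc₃.mono (hsub T hT))
  have hx₂ : ∀ T, 0 ≤ T → IntervalIntegrable (fun s => η * x₂ s) volume 0 T := fun T hT =>
    ((hc₂.mono (hsub T hT)).intervalIntegrable).const_mul η
  exact ⟨⟨fun T hT => (hinc T hT).neg, h₁⟩, ⟨fun T hT => (hinc T hT).sub (hx₂ T hT), h₂⟩,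
    ⟨fun T hT => (hx₂ T hT).sub (hrem T hT), h₃⟩⟩

lemma isPrimitiveOnIci_fst_add_snd (hu : IsCtrl βmin βnom γnom γmax u₁ u₂)
    (hx : IsTraj η u₁ u₂ x₁ x₂ x₃) :
    IsPrimitiveOnIci (fun t => x₁ t + x₂ t) fun s => -(η * x₂ s) :=
  ((hx.isPrimitiveOnIci hu).1.add (hx.isPrimitiveOnIci hu).2.1).congr_integrand fun s => by ring

lemma isPrimitiveOnIci_sum (hu : IsCtrl βmin βnom γnom γmax u₁ u₂)
    (hx : IsTraj η u₁ u₂ x₁ x₂ x₃) :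
    IsPrimitiveOnIci (fun t => x₁ t + x₂ t + x₃ t) fun s => -(u₂ s * x₃ s) :=
  ((hx.isPrimitiveOnIci_fst_add_snd hu).add (hx.isPrimitiveOnIci hu).2.2).congr_integrand
    fun s => by ring

lemma nonneg (hβmin : 0 ≤ βmin) (hγnom : 0 ≤ γnom) (hη : 0 ≤ η)
    (hu : IsCtrl βmin βnom γnom γmax u₁ u₂) (hx : IsTraj η u₁ u₂ x₁ x₂ x₃)
    (h₀ : 0 ≤ x₁ 0 ∧ 0 ≤ x₂ 0 ∧ 0 ≤ x₃ 0) :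
    ∀ t, 0 ≤ t → 0 ≤ x₁ t ∧ 0 ≤ x₂ t ∧ 0 ≤ x₃ t := by
  obtain ⟨hP₁, hP₂, hP₃⟩ := hx.isPrimitiveOnIci hu
  obtain ⟨hc₁, hc₂, hc₃, -⟩ := hx
  have key := forall_nonpos_of_isPrimitiveOnIci
    (f := ![fun t => -x₁ t, fun t => -x₂ t, fun t => -x₃ t])
    (g := ![fun s => u₁ s * x₁ s * x₃ s, fun s => -(u₁ s * x₁ s * x₃ s - η * x₂ s),
      fun s => -(η * x₂ s - u₂ s * x₃ s)])
    (fun i => by fin_cases i <;> [exact hc₁.neg; exact hc₂.neg; exact hc₃.neg])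
    (fun i => by
      fin_cases i <;>
        [exact hP₁.neg.congr_integrand fun s => neg_neg _; exact hP₂.neg; exact hP₃.neg])
    (fun i => by fin_cases i <;> simp [h₀.1, h₀.2.1, h₀.2.2]) ?_
  · exact fun t ht => ⟨by simpa using key t ht 0, by simpa using key t ht 1,
      by simpa using key t ht 2⟩
  intro T
  obtain ⟨M₁, hM₁⟩ := isCompact_Icc.exists_bound_of_continuousOn (hc₁.mono fun s hs => hs.1)
  obtain ⟨M₃, hM₃⟩ := isCompact_Icc.exists_bound_of_continuousOn (hc₃.mono fun s hs => hs.1)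
  have hβnom : 0 ≤ βnom := hβmin.trans ((hu.2.2 0 le_rfl).1.1.trans (hu.2.2 0 le_rfl).1.2)
  refine ⟨βnom * max (max M₁ M₃) 0 + η, by positivity, fun i s hs μ hμ hle hpos => ?_⟩
  obtain ⟨⟨hu₁, hu₁'⟩, hu₂, -⟩ := hu.2.2 s hs.1
  have hbound := quasiMonotone_neg_seir ⟨hβmin.trans hu₁, hu₁'⟩ (hγnom.trans hu₂) hη
    ((le_abs_self _).trans <| (hM₁ s hs).trans <| (le_max_left _ _).trans (le_max_left _ 0))
    ((hM₃ s hs).trans <| (le_max_right _ _).trans (le_max_left _ 0)) hμ (hle 0) (hle 1) (hle 2)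
  fin_cases i
  exacts [hbound.1 hpos, hbound.2.1 hpos, hbound.2.2 hpos]

lemma exposed_le_and_infected_le (hη : 0 < η) (hγnom : 0 ≤ γnom)
    (hu : IsCtrl βmin βnom γnom γmax u₁ u₂) (hx : IsTraj η u₁ u₂ x₁ x₂ x₃)
    (hx₁ : ∀ t, 0 ≤ t → 0 ≤ x₁ t ∧ βnom * x₁ t ≤ γnom) (hx₃ : ∀ t, 0 ≤ t → 0 ≤ x₃ t) {I : ℝ}
    (h₀ : x₂ 0 ≤ γnom * I / η ∧ x₃ 0 ≤ I) :
    ∀ t, 0 ≤ t → x₂ t ≤ γnom * I / η ∧ x₃ t ≤ I := by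
  obtain ⟨-, hP₂, hP₃⟩ := hx.isPrimitiveOnIci hu
  obtain ⟨-, hc₂, hc₃, -⟩ := hx
  have key := forall_nonpos_of_isPrimitiveOnIci
    (f := ![fun t => x₂ t - γnom * I / η, fun t => x₃ t - I])
    (g := ![fun s => u₁ s * x₁ s * x₃ s - η * x₂ s, fun s => η * x₂ s - u₂ s * x₃ s])
    (fun i => by
      fin_cases i <;> [exact hc₂.sub continuousOn_const; exact hc₃.sub continuousOn_const])
    (fun i => by fin_cases i <;> [exact hP₂.sub_const _; exact hP₃.sub_const _])
    (fun i => by fin_cases i <;> simp [h₀.1, h₀.2]) ?_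
  · exact fun t ht => ⟨by simpa using key t ht 0, by simpa using key t ht 1⟩
  refine fun T => ⟨γnom + η, by positivity, fun i s hs μ hμ hle hpos => ?_⟩
  obtain ⟨⟨-, hu₁⟩, hu₂, -⟩ := hu.2.2 s hs.1
  obtain ⟨hx₁₀, hx₁γ⟩ := hx₁ s hs.1
  have hbound := quasiMonotone_seir_sub hη hγnom
    ((mul_le_mul_of_nonneg_right hu₁ hx₁₀).trans hx₁γ) hu₂ (hx₃ s hs.1) hμ (hle 0) (hle 1)
  fin_cases i
  exacts [hbound.1 hpos, hbound.2 hpos]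

lemma antitoneOn_fst (hβmin : 0 ≤ βmin) (hu : IsCtrl βmin βnom γnom γmax u₁ u₂)
    (hx : IsTraj η u₁ u₂ x₁ x₂ x₃) (hnn : ∀ t, 0 ≤ t → 0 ≤ x₁ t ∧ 0 ≤ x₂ t ∧ 0 ≤ x₃ t) :
    AntitoneOn x₁ (Ici 0) :=
  (hx.isPrimitiveOnIci hu).1.antitoneOn fun s hs => neg_nonpos.2 <|
    mul_nonneg (mul_nonneg (hβmin.trans (hu.2.2 s hs).1.1) (hnn s hs).1) (hnn s hs).2.2

lemma antitoneOn_sum (hγnom : 0 ≤ γnom) (hu : IsCtrl βmin βnom γnom γmax u₁ u₂)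
    (hx : IsTraj η u₁ u₂ x₁ x₂ x₃) (hx₃ : ∀ t, 0 ≤ t → 0 ≤ x₃ t) :
    AntitoneOn (fun t => x₁ t + x₂ t + x₃ t) (Ici 0) :=
  (hx.isPrimitiveOnIci_sum hu).antitoneOn fun s hs => neg_nonpos.2 <|
    mul_nonneg (hγnom.trans (hu.2.2 s hs).2.1) (hx₃ s hs)

lemma tendsto (hβmin : 0 ≤ βmin) (hη : 0 < η) (hγnom : 0 < γnom)
    (hu : IsCtrl βmin βnom γnom γmax u₁ u₂) (hx : IsTraj η u₁ u₂ x₁ x₂ x₃)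
    (hnn : ∀ t, 0 ≤ t → 0 ≤ x₁ t ∧ 0 ≤ x₂ t ∧ 0 ≤ x₃ t) :
    (∃ L, Tendsto x₁ atTop (𝓝 L)) ∧ Tendsto x₂ atTop (𝓝 0) ∧ Tendsto x₃ atTop (𝓝 0) := by
  have h₁ (t) (ht : 0 ≤ t) : 0 ≤ x₁ t := (hnn t ht).1
  have h₂ (t) (ht : 0 ≤ t) : 0 ≤ x₂ t := (hnn t ht).2.1
  have h₃ (t) (ht : 0 ≤ t) : 0 ≤ x₃ t := (hnn t ht).2.2
  have hu₂ (s) (hs : 0 ≤ s) : γnom ≤ u₂ s := (hu.2.2 s hs).2.1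
  have hk₁₂ (s) (hs : 0 ≤ s) : 0 ≤ η * x₂ s := mul_nonneg hη.le (h₂ s hs)
  have hk₁₂₃ (s) (hs : 0 ≤ s) : 0 ≤ u₂ s * x₃ s := mul_nonneg (hγnom.le.trans (hu₂ s hs)) (h₃ s hs)
  have hf₁₂ (t) (ht : 0 ≤ t) : 0 ≤ x₁ t + x₂ t := add_nonneg (h₁ t ht) (h₂ t ht)
  have hf₁₂₃ (t) (ht : 0 ≤ t) : 0 ≤ x₁ t + x₂ t + x₃ t := add_nonneg (hf₁₂ t ht) (h₃ t ht)
  have hP₁₂ := hx.isPrimitiveOnIci_fst_add_snd hu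
  have hP₁₂₃ := hx.isPrimitiveOnIci_sum hu
  obtain ⟨L₁, hL₁⟩ := (hx.antitoneOn_fst hβmin hu hnn).exists_tendsto_atTop h₁
  obtain ⟨L₂, hL₂⟩ := hP₁₂.exists_tendsto_atTop hk₁₂ hf₁₂
  obtain ⟨L₃, hL₃⟩ := hP₁₂₃.exists_tendsto_atTop hk₁₂₃ hf₁₂₃
  have hx₂ : Tendsto x₂ atTop (𝓝 (L₂ - L₁)) := (hL₂.sub hL₁).congr fun t => add_sub_cancel_left _ _
  have hx₃ : Tendsto x₃ atTop (𝓝 (L₃ - L₂)) := (hL₃.sub hL₂).congr fun t => add_sub_cancel_left _ _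
  have hi₂ : IntegrableOn x₂ (Ioi 0) := by
    have := (hP₁₂.integrableOn_Ioi hk₁₂ hf₁₂).const_mul η⁻¹
    simp only [← mul_assoc, inv_mul_cancel₀ hη.ne', one_mul] at this
    exact this
  have hi₃ : IntegrableOn x₃ (Ioi 0) := by
    refine Integrable.mono' ((hP₁₂₃.integrableOn_Ioi hk₁₂₃ hf₁₂₃).const_mul γnom⁻¹)
      ((hx.2.2.1.mono Ioi_subset_Ici_self).aestronglyMeasurable measurableSet_Ioi) <|
        ae_restrict_of_forall_mem measurableSet_Ioi fun s hs => ?_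
    rw [Real.norm_of_nonneg (h₃ s hs.le), ← mul_assoc]
    exact le_mul_of_one_le_left (h₃ s hs.le) ((one_le_inv_mul₀ hγnom).2 (hu₂ s hs.le))
  exact ⟨⟨L₁, hL₁⟩, eq_zero_of_tendsto_of_integrableOn_Ioi hi₂ hx₂ ▸ hx₂,
    eq_zero_of_tendsto_of_integrableOn_Ioi hi₃ hx₃ ▸ hx₃⟩

end IsTraj

theorem XM_robust_invariance_and_eradication_general
    (η βmin βnom γnom γmax Imax : ℝ)
    (hη : 0 < η) (hβm : 0 < βmin) (hβ : βmin < βnom)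
    (hγn : 0 < γnom)
    (a b c : ℝ) (hx0 : InXM η βnom γnom Imax a b c)
    (u₁ u₂ x₁ x₂ x₃ : ℝ → ℝ)
    (hu : IsCtrl βmin βnom γnom γmax u₁ u₂)
    (hx : IsTraj η u₁ u₂ x₁ x₂ x₃)
    (ha : x₁ 0 = a) (hb : x₂ 0 = b) (hc : x₃ 0 = c) :
    (∀ t : ℝ, 0 ≤ t → InXM η βnom γnom Imax (x₁ t) (x₂ t) (x₃ t)) ∧
      Tendsto x₂ atTop (𝓝 0) ∧ Tendsto x₃ atTop (𝓝 0) ∧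
      ∃ xinf : ℝ, Tendsto x₁ atTop (𝓝 xinf) ∧ 0 ≤ xinf ∧ xinf ≤ γnom / βnom := by
  obtain ⟨⟨⟨ha₀, -⟩, ⟨hb₀, -⟩, ⟨hc₀, -⟩, hcI, hsum⟩, haβ, hbB⟩ := hx0
  subst ha hb hc
  have hnn := hx.nonneg hβm.le hγn.le hη.le hu ⟨ha₀, hb₀, hc₀⟩
  have hx₁ : ∀ t, 0 ≤ t → x₁ t ≤ γnom / βnom := fun t ht =>
    (hx.antitoneOn_fst hβm.le hu hnn self_mem_Ici ht ht).trans haβ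
  have hbox := hx.exposed_le_and_infected_le hη hγn.le hu
    (fun t ht => ⟨(hnn t ht).1, (le_div_iff₀' (hβm.trans hβ)).1 (hx₁ t ht)⟩)
    (fun t ht => (hnn t ht).2.2) ⟨hbB, hcI⟩
  have hsum_le : ∀ t, 0 ≤ t → x₁ t + x₂ t + x₃ t ≤ 1 := fun t ht =>
    (hx.antitoneOn_sum hγn.le hu (fun t ht => (hnn t ht).2.2) self_mem_Ici ht ht).trans hsum
  obtain ⟨⟨L, hL⟩, hx₂, hx₃⟩ := hx.tendsto hβm.le hη hγn hu hnn
  refine ⟨fun t ht => ⟨inX_of_nonneg (hnn t ht).1 (hnn t ht).2.1 (hnn t ht).2.2 (hbox t ht).2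
    (hsum_le t ht), hx₁ t ht, (hbox t ht).1⟩, hx₂, hx₃, L, hL, ?_, ?_⟩
  · exact ge_of_tendsto hL ((eventually_ge_atTop 0).mono fun t ht => (hnn t ht).1)
  · exact le_of_tendsto hL ((eventually_ge_atTop 0).mono hx₁)

/-- `X_M` is robustly invariant, and from `X_M` the disease dies out
for every control, with `x₁` converging to a limit in `[0, γnom/βnom]`. -/
theorem XM_robust_invariance_and_eradication
    (η βmin βnom γnom γmax Imax : ℝ)
    (hη : 0 < η) (hβm : 0 < βmin) (hβ : βmin < βnom)
    (hγn : 0 < γnom) (hγ : γnom < γmax) (hIm : 0 < Imax) (hIm1 : Imax ≤ 1)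
    (a b c : ℝ) (hx0 : InXM η βnom γnom Imax a b c)
    (u₁ u₂ x₁ x₂ x₃ : ℝ → ℝ)
    (hu : IsCtrl βmin βnom γnom γmax u₁ u₂)
    (hx : IsTraj η u₁ u₂ x₁ x₂ x₃)
    (ha : x₁ 0 = a) (hb : x₂ 0 = b) (hc : x₃ 0 = c) :
    (∀ t : ℝ, 0 ≤ t → InXM η βnom γnom Imax (x₁ t) (x₂ t) (x₃ t)) ∧
      Tendsto x₂ atTop (𝓝 0) ∧ Tendsto x₃ atTop (𝓝 0) ∧
      ∃ xinf : ℝ, Tendsto x₁ atTop (𝓝 xinf) ∧ 0 ≤ xinf ∧ xinf ≤ γnom / βnom :=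
  XM_robust_invariance_and_eradication_general η βmin βnom γnom γmax Imax hη hβm hβ hγn a b c hx0 u₁
    u₂ x₁ x₂ x₃ hu hx ha hb hc
end
end

section
/- There exists a constant C ≥ 0 such that for every x⁰ ∈ X_M, the nominal trajectory (with control u_nom) satisfies J_∞(x⁰, u_nom) = λ ∫₀^∞ (x₂(t)² + x₃(t)²) dt ≤ C. -/
open MeasureTheory Set Filter Topology
open scoped ENNReal

noncomputable section

/-! The nominal system is quasi-positive: a Gronwall estimate on the largest negative part
of the state shows that the trajectory stays nonnegative. The total mass then obeys
`x₁ t + x₂ t + x₃ t + γ ∫₀ᵗ x₃ = x₁ 0 + x₂ 0 + x₃ 0 ≤ 1`, and the equation for `x₃` gives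
`η ∫₀ᵗ x₂ ≤ x₃ t + γ ∫₀ᵗ x₃ ≤ 1`: these integrals are the total flows `E → I` and `I → R`.
As `x₂, x₃ ∈ [0, 1]`, the nominal stage cost `λ (x₂² + x₃²)` is at most `x₂ + x₃`, whose
integral over `(0, ∞)` is therefore at most `1/η + 1/γ`. -/

theorem hasDerivWithinAt_Ici_of_eq_add_integral {F x : ℝ → ℝ} {a t : ℝ}
    (hF : ContinuousOn F (Ici a)) (hx : ∀ t, a ≤ t → x t = x a + ∫ s in a..t, F s)
    (ht : a ≤ t) : HasDerivWithinAt x (F t) (Ici t) t := by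
  have hIoi : Ioi t ⊆ Ici a := fun z hz => ht.trans (le_of_lt hz)
  have hint : IntervalIntegrable F volume a t :=
    (hF.mono Icc_subset_Ici_self).intervalIntegrable_of_Icc ht
  have hmeas : StronglyMeasurableAtFilter F (𝓝[Ioi t] t) volume :=
    ⟨Ici a, mem_of_superset self_mem_nhdsWithin hIoi,
      hF.aestronglyMeasurable measurableSet_Ici⟩
  have hG := (intervalIntegral.integral_hasDerivWithinAt_right (s := Ici t) hint hmeas
    ((hF t ht).mono hIoi)).const_add (x a)
  exact hG.congr (fun u hu => hx u (ht.trans hu)) (hx t ht)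

theorem setLIntegral_Ioi_ofReal_le {f : ℝ → ℝ} {a C : ℝ} (hf : ContinuousOn f (Ici a))
    (hnn : ∀ t ∈ Ioi a, 0 ≤ f t) (hC : ∀ b, a ≤ b → ∫ t in a..b, f t ≤ C) :
    ∫⁻ t in Ioi a, ENNReal.ofReal (f t) ≤ ENNReal.ofReal C := by
  have hU : ⋃ n : ℕ, Ioc a (a + n) = Ioi a := iUnion_Ioc_eq_Ioi_self_iff.2 fun x _ =>
    (exists_nat_ge (x - a)).imp fun _ hn => by linarith
  have hmono : Monotone fun n : ℕ => Ioc a (a + n) := fun m n hmn =>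
    Ioc_subset_Ioc_right (by simp [hmn])
  rw [← hU, setLIntegral_iUnion_of_directed _ hmono.directed_le]
  refine iSup_le fun n => ?_
  have hn : a ≤ a + n := by simp
  have hint : IntegrableOn f (Ioc a (a + n)) :=
    ((hf.mono Icc_subset_Ici_self).integrableOn_Icc).mono_set Ioc_subset_Icc_self
  rw [← ofReal_integral_eq_lintegral_ofReal hint
    ((ae_restrict_iff' measurableSet_Ioc).2 (ae_of_all _ fun t ht => hnn t ht.1)),
    ← intervalIntegral.integral_of_le hn]
  exact ENNReal.ofReal_le_ofReal (hC _ hn)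

theorem HasDerivWithinAt.eventually_lt_add_mul_sub {g : ℝ → ℝ} {d v B r s : ℝ}
    (hg : HasDerivWithinAt g d (Ici s) s) (hle : g s ≤ v) (hd : g s = v → d ≤ B)
    (hr : B < r) : ∀ᶠ z in 𝓝[>] s, g z < v + r * (z - s) := by
  rcases hle.eq_or_lt with heq | hlt
  · have hslope : Tendsto (slope g s) (𝓝[>] s) (𝓝 d) := by
      simpa [hasDerivWithinAt_iff_tendsto_slope] using hg
    filter_upwards [hslope.eventually_lt_const ((hd heq).trans_lt hr), self_mem_nhdsWithin]
      with z hz (hsz : s < z)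
    rw [slope_def_field, div_lt_iff₀ (sub_pos.2 hsz)] at hz
    linarith
  · have hcont : ContinuousWithinAt (fun z => g z - r * (z - s)) (Ioi s) s :=
      (hg.continuousWithinAt.mono Ioi_subset_Ici_self).sub (by fun_prop)
    filter_upwards [hcont.eventually_lt_const (by simpa using hlt)] with z hz
    linarith

def largestNegPart (x₁ x₂ x₃ : ℝ → ℝ) (s : ℝ) : ℝ :=
  max (max (-x₁ s) (-x₂ s)) (max (-x₃ s) 0)

section SEIR

variable {η β γ : ℝ} {x₁ x₂ x₃ : ℝ → ℝ}

-- The component realising the maximum has right derivative at most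
-- `(β M + η) * largestNegPart`; the others stay strictly below it by continuity.
theorem largestNegPart_eventually_lt (hη : 0 ≤ η) (hβ : 0 ≤ β) (hγ : 0 ≤ γ) {M r s : ℝ}
    (hd₁ : HasDerivWithinAt x₁ (-(β * x₁ s * x₃ s)) (Ici s) s)
    (hd₂ : HasDerivWithinAt x₂ (β * x₁ s * x₃ s - η * x₂ s) (Ici s) s)
    (hd₃ : HasDerivWithinAt x₃ (η * x₂ s - γ * x₃ s) (Ici s) s)
    (hM₁ : |x₁ s| ≤ M) (hM₃ : |x₃ s| ≤ M)
    (hr : (β * M + η) * largestNegPart x₁ x₂ x₃ s < r) :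
    ∀ᶠ z in 𝓝[>] s,
      largestNegPart x₁ x₂ x₃ z < largestNegPart x₁ x₂ x₃ s + r * (z - s) := by
  set f := largestNegPart x₁ x₂ x₃ s
  have hM0 : 0 ≤ M := (abs_nonneg _).trans hM₁
  rw [abs_le] at hM₁ hM₃
  have hb₁ : -x₁ s ≤ f := (le_max_left _ _).trans (le_max_left _ _)
  have hb₂ : -x₂ s ≤ f := (le_max_right _ _).trans (le_max_left _ _)
  have hb₃ : -x₃ s ≤ f := (le_max_left _ _).trans (le_max_right _ _)
  have hf0 : 0 ≤ f := (le_max_right _ _).trans (le_max_right _ _)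
  have hr0 : 0 < r := (mul_nonneg (by positivity) hf0).trans_lt hr
  have e₁ := hd₁.neg.eventually_lt_add_mul_sub hb₁ (fun h => by
    rw [Pi.neg_apply, neg_eq_iff_eq_neg] at h
    rw [h]
    nlinarith [mul_nonneg (mul_nonneg hβ hf0) (by linarith : 0 ≤ M + x₃ s),
      mul_nonneg hη hf0]) hr
  have e₂ := hd₂.neg.eventually_lt_add_mul_sub hb₂ (fun h => by
    simp only [Pi.neg_apply] at h
    have : -(x₁ s * x₃ s) ≤ M * f := by
      rcases le_total 0 (x₁ s) with h₁ | h₁ <;> rcases le_total 0 (x₃ s) with h₃ | h₃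
      all_goals nlinarith
    nlinarith [mul_le_mul_of_nonneg_left this hβ, mul_nonneg hη hf0]) hr
  have e₃ := hd₃.neg.eventually_lt_add_mul_sub hb₃ (fun h => by
    simp only [Pi.neg_apply] at h
    nlinarith [mul_le_mul_of_nonneg_left hb₂ hη, mul_nonneg hγ hf0,
      mul_nonneg (mul_nonneg hβ hM0) hf0]) hr
  filter_upwards [e₁, e₂, e₃, self_mem_nhdsWithin] with z h₁ h₂ h₃ (hz : s < z)
  exact max_lt (max_lt h₁ h₂) (max_lt h₃ (by nlinarith))

theorem seir_nonneg (hη : 0 ≤ η) (hβ : 0 ≤ β) (hγ : 0 ≤ γ)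
    (hc₁ : ContinuousOn x₁ (Ici 0)) (hc₂ : ContinuousOn x₂ (Ici 0))
    (hc₃ : ContinuousOn x₃ (Ici 0))
    (hd₁ : ∀ t, 0 ≤ t → HasDerivWithinAt x₁ (-(β * x₁ t * x₃ t)) (Ici t) t)
    (hd₂ : ∀ t, 0 ≤ t → HasDerivWithinAt x₂ (β * x₁ t * x₃ t - η * x₂ t) (Ici t) t)
    (hd₃ : ∀ t, 0 ≤ t → HasDerivWithinAt x₃ (η * x₂ t - γ * x₃ t) (Ici t) t)
    (h₁ : 0 ≤ x₁ 0) (h₂ : 0 ≤ x₂ 0) (h₃ : 0 ≤ x₃ 0) {T : ℝ} (hT : 0 ≤ T) :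
    0 ≤ x₁ T ∧ 0 ≤ x₂ T ∧ 0 ≤ x₃ T := by
  have hsub : Icc (0:ℝ) T ⊆ Ici 0 := Icc_subset_Ici_self
  obtain ⟨M₁, hM₁⟩ := isCompact_Icc.exists_bound_of_continuousOn (hc₁.mono hsub)
  obtain ⟨M₃, hM₃⟩ := isCompact_Icc.exists_bound_of_continuousOn (hc₃.mono hsub)
  have hf' : ∀ s ∈ Ico 0 T, ∀ r, (β * max M₁ M₃ + η) * largestNegPart x₁ x₂ x₃ s < r →
      ∃ᶠ z in 𝓝[>] s,
        (z - s)⁻¹ * (largestNegPart x₁ x₂ x₃ z - largestNegPart x₁ x₂ x₃ s) < r := by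
    rintro s ⟨hs, hsT⟩ r hr
    refine Eventually.frequently ?_
    filter_upwards [largestNegPart_eventually_lt hη hβ hγ (hd₁ s hs) (hd₂ s hs) (hd₃ s hs)
      ((hM₁ s ⟨hs, hsT.le⟩).trans (le_max_left _ _))
      ((hM₃ s ⟨hs, hsT.le⟩).trans (le_max_right _ _)) hr, self_mem_nhdsWithin]
      with z hfz (hz : s < z)
    rw [inv_mul_lt_iff₀ (sub_pos.2 hz)]
    linarith
  have hfc : ContinuousOn (largestNegPart x₁ x₂ x₃) (Icc 0 T) := by
    have := hc₁.mono hsub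
    have := hc₂.mono hsub
    have := hc₃.mono hsub
    unfold largestNegPart
    fun_prop
  have hf0 : largestNegPart x₁ x₂ x₃ 0 ≤ 0 := by
    simp only [largestNegPart, max_le_iff, neg_nonpos]
    exact ⟨⟨h₁, h₂⟩, h₃, le_rfl⟩
  have hfT := le_gronwallBound_of_liminf_deriv_right_le hfc hf' hf0
    (fun _ _ => (add_zero _).ge) T ⟨hT, le_rfl⟩
  rw [sub_zero, gronwallBound_ε0_δ0] at hfT
  simp only [largestNegPart, max_le_iff, neg_nonpos] at hfT
  exact ⟨hfT.1.1, hfT.1.2, hfT.2.1⟩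

end SEIR

theorem stageCost_nominal_le {lam βnom γnom b c : ℝ} (hlam : lam ≤ 1)
    (hb : 0 ≤ b) (hc : 0 ≤ c) (hbc : b + c ≤ 1) :
    stageCost lam βnom γnom b c βnom γnom ≤ b + c := by
  simp only [stageCost, sub_self]
  nlinarith [mul_le_of_le_one_left (by positivity : 0 ≤ b ^ 2 + c ^ 2) hlam]

namespace IsTraj

variable {η β γ : ℝ} {x₁ x₂ x₃ : ℝ → ℝ}

theorem nonneg_of_const (hx : IsTraj η (fun _ => β) (fun _ => γ) x₁ x₂ x₃)
    (hη : 0 ≤ η) (hβ : 0 ≤ β) (hγ : 0 ≤ γ) (h₁ : 0 ≤ x₁ 0) (h₂ : 0 ≤ x₂ 0) (h₃ : 0 ≤ x₃ 0)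
    {t : ℝ} (ht : 0 ≤ t) : 0 ≤ x₁ t ∧ 0 ≤ x₂ t ∧ 0 ≤ x₃ t := by
  obtain ⟨hc₁, hc₂, hc₃, hi₁, hi₂, hi₃⟩ := hx
  beta_reduce at hi₁ hi₂ hi₃
  exact seir_nonneg hη hβ hγ hc₁ hc₂ hc₃
    (fun _ hs => hasDerivWithinAt_Ici_of_eq_add_integral (by fun_prop) hi₁ hs)
    (fun _ hs => hasDerivWithinAt_Ici_of_eq_add_integral (by fun_prop) hi₂ hs)
    (fun _ hs => hasDerivWithinAt_Ici_of_eq_add_integral (by fun_prop) hi₃ hs) h₁ h₂ h₃ ht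

theorem sum_add_integral_eq (hx : IsTraj η (fun _ => β) (fun _ => γ) x₁ x₂ x₃) {t : ℝ}
    (ht : 0 ≤ t) :
    x₁ t + x₂ t + x₃ t + γ * ∫ s in (0:ℝ)..t, x₃ s = x₁ 0 + x₂ 0 + x₃ 0 := by
  obtain ⟨hc₁, hc₂, hc₃, hi₁, hi₂, hi₃⟩ := hx
  beta_reduce at hi₁ hi₂ hi₃
  have hint {g : ℝ → ℝ} (hg : ContinuousOn g (Ici 0)) : IntervalIntegrable g volume 0 t :=
    (hg.mono Icc_subset_Ici_self).intervalIntegrable_of_Icc ht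
  have hflux : ((∫ s in (0:ℝ)..t, -(β * x₁ s * x₃ s)) +
      ∫ s in (0:ℝ)..t, (β * x₁ s * x₃ s - η * x₂ s)) +
      ∫ s in (0:ℝ)..t, (η * x₂ s - γ * x₃ s) = -(γ * ∫ s in (0:ℝ)..t, x₃ s) := by
    rw [← intervalIntegral.integral_add (hint (by fun_prop)) (hint (by fun_prop)),
      ← intervalIntegral.integral_add ((hint (by fun_prop)).add (hint (by fun_prop)))
        (hint (by fun_prop)),
      ← intervalIntegral.integral_const_mul, ← intervalIntegral.integral_neg]
    congr 1 with s
    ring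
  linarith [hi₁ t ht, hi₂ t ht, hi₃ t ht]

theorem sum_le (hx : IsTraj η (fun _ => β) (fun _ => γ) x₁ x₂ x₃) (hγ : 0 ≤ γ)
    (h₃ : ∀ s, 0 ≤ s → 0 ≤ x₃ s) {t : ℝ} (ht : 0 ≤ t) :
    x₁ t + x₂ t + x₃ t ≤ x₁ 0 + x₂ 0 + x₃ 0 := by
  have hI : 0 ≤ ∫ s in (0:ℝ)..t, x₃ s :=
    intervalIntegral.integral_nonneg ht fun s hs => h₃ s hs.1
  linarith [hx.sum_add_integral_eq ht, mul_nonneg hγ hI]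

theorem integral_add_le (hx : IsTraj η (fun _ => β) (fun _ => γ) x₁ x₂ x₃) (hη : 0 < η)
    (hγ : 0 < γ) (hnn : ∀ s, 0 ≤ s → 0 ≤ x₁ s ∧ 0 ≤ x₂ s ∧ 0 ≤ x₃ s)
    (h₀ : x₁ 0 + x₂ 0 + x₃ 0 ≤ 1) {t : ℝ} (ht : 0 ≤ t) :
    ∫ s in (0:ℝ)..t, (x₂ s + x₃ s) ≤ 1 / η + 1 / γ := by
  have hS := hx.sum_add_integral_eq ht
  obtain ⟨-, hc₂, hc₃, -, -, hi₃⟩ := hx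
  have hint {g : ℝ → ℝ} (hg : ContinuousOn g (Ici 0)) : IntervalIntegrable g volume 0 t :=
    (hg.mono Icc_subset_Ici_self).intervalIntegrable_of_Icc ht
  have hx₃ : x₃ t = x₃ 0 + (η * ∫ s in (0:ℝ)..t, x₂ s) - γ * ∫ s in (0:ℝ)..t, x₃ s := by
    rw [hi₃ t ht, intervalIntegral.integral_sub (hint (by fun_prop)) (hint (by fun_prop)),
      intervalIntegral.integral_const_mul, intervalIntegral.integral_const_mul, add_sub_assoc]
  have hI₂ : (∫ s in (0:ℝ)..t, x₂ s) ≤ 1 / η := by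
    rw [le_div_iff₀' hη]
    linarith [hnn t ht, hnn 0 le_rfl]
  have hI₃ : (∫ s in (0:ℝ)..t, x₃ s) ≤ 1 / γ := by
    rw [le_div_iff₀' hγ]
    linarith [hnn t ht]
  rw [intervalIntegral.integral_add (hint hc₂) (hint hc₃)]
  exact add_le_add hI₂ hI₃

end IsTraj

theorem nominal_cost_uniformly_bounded_on_XM_general
    (η βmin βnom γnom Imax lam : ℝ)
    (hη : 0 < η) (hβm : 0 < βmin) (hβ : βmin < βnom)
    (hγn : 0 < γnom)
    (hlam : lam ∈ Ioc (0:ℝ) 1) :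
    ∃ C : ℝ, 0 ≤ C ∧
      ∀ a b c : ℝ, InXM η βnom γnom Imax a b c →
        ∀ x₁ x₂ x₃ : ℝ → ℝ,
          IsTraj η (fun _ => βnom) (fun _ => γnom) x₁ x₂ x₃ →
          x₁ 0 = a → x₂ 0 = b → x₃ 0 = c →
          (∫⁻ t in Ioi (0:ℝ),
              ENNReal.ofReal
                (stageCost lam βnom γnom (x₂ t) (x₃ t) βnom γnom)) ≤
            ENNReal.ofReal C := by
  refine ⟨1 / η + 1 / γnom, by positivity, ?_⟩
  rintro _ _ _ ⟨⟨ha, hb, hc, -, h₀⟩, -, -⟩ x₁ x₂ x₃ hx rfl rfl rfl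
  have hnn : ∀ t, 0 ≤ t → 0 ≤ x₁ t ∧ 0 ≤ x₂ t ∧ 0 ≤ x₃ t := fun _ =>
    hx.nonneg_of_const hη.le (hβm.trans hβ).le hγn.le ha.1 hb.1 hc.1
  have hle : ∀ t, 0 ≤ t → x₁ t + x₂ t + x₃ t ≤ 1 := fun t ht =>
    (hx.sum_le hγn.le (fun s hs => (hnn s hs).2.2) ht).trans h₀
  calc _ ≤ ∫⁻ t in Ioi (0:ℝ), ENNReal.ofReal (x₂ t + x₃ t) := by
        refine setLIntegral_mono' measurableSet_Ioi fun t ht => ENNReal.ofReal_le_ofReal ?_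
        obtain ⟨h₁, h₂, h₃⟩ := hnn t (le_of_lt ht)
        exact stageCost_nominal_le hlam.2 h₂ h₃ (by linarith [hle t (le_of_lt ht)])
    _ ≤ _ := setLIntegral_Ioi_ofReal_le (hx.2.1.add hx.2.2.1)
        (fun t ht => add_nonneg (hnn t (le_of_lt ht)).2.1 (hnn t (le_of_lt ht)).2.2)
        fun _ => hx.integral_add_le hη hγn hnn h₀

/-- the infinite-horizon cost of the nominal control is uniformly
bounded on the invariant box `X_M`. -/
theorem nominal_cost_uniformly_bounded_on_XM
    (η βmin βnom γnom γmax Imax lam : ℝ)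
    (hη : 0 < η) (hβm : 0 < βmin) (hβ : βmin < βnom)
    (hγn : 0 < γnom) (hγ : γnom < γmax) (hIm : 0 < Imax) (hIm1 : Imax ≤ 1)
    (hlam : lam ∈ Ioc (0:ℝ) 1) :
    ∃ C : ℝ, 0 ≤ C ∧
      ∀ a b c : ℝ, InXM η βnom γnom Imax a b c →
        ∀ x₁ x₂ x₃ : ℝ → ℝ,
          IsTraj η (fun _ => βnom) (fun _ => γnom) x₁ x₂ x₃ →
          x₁ 0 = a → x₂ 0 = b → x₃ 0 = c →
          (∫⁻ t in Ioi (0:ℝ),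
              ENNReal.ofReal
                (stageCost lam βnom γnom (x₂ t) (x₃ t) βnom γnom)) ≤
            ENNReal.ofReal C :=
  nominal_cost_uniformly_bounded_on_XM_general η βmin βnom γnom Imax lam hη hβm hβ hγn hlam
end
end

section
/- For every x⁰ ∈ X_M, along the nominal trajectory (with control u_nom) the limit x₁^∞ = lim_{t→∞} x₁(t) exists and ∫₀^∞ x₃(t) dt = (x₁⁰ − x₁^∞ + x₂⁰ + x₃⁰)/γ_nom (in particular this integral is finite). -/
open MeasureTheory Set Filter Topology
open scoped ENNReal

noncomputable section

/-!
The trajectory stays in the nonnegative orthant: `E = ∑ min(xᵢ, 0)²` vanishes at `t = 0` and,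
because `min(x, 0) * x = min(x, 0)²` absorbs the diagonal terms of the vector field, satisfies
`E' ≤ K E` on every compact time interval, so `E ≡ 0` by a Gronwall argument.
With nonnegativity, `(x₁ + x₂)' = -η x₂` and `(x₁ + x₂ + x₃)' = -γ x₃` show that `∫ x₂` and `∫ x₃`
are finite. Then `x₂ + x₃` and its derivative are integrable on `(0, ∞)`, so `x₂ + x₃ → 0`,
and `x₁ = (x₁⁰ + x₂⁰ + x₃⁰ - γ ∫₀ᵗ x₃) - (x₂ + x₃)` converges to `x₁⁰ + x₂⁰ + x₃⁰ - γ ∫₀^∞ x₃`.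
-/

open intervalIntegral

lemma hasDerivAt_min_zero_sq (y : ℝ) :
    HasDerivAt (fun z : ℝ => min z 0 ^ 2) (2 * min y 0) y := by
  rcases lt_trichotomy y 0 with hy | rfl | hy
  · have h : (fun z : ℝ => min z 0 ^ 2) =ᶠ[𝓝 y] fun z => z ^ 2 := by
      filter_upwards [Iio_mem_nhds hy] with z (hz : z < 0) using by rw [min_eq_left hz.le]
    simpa [min_eq_left hy.le] using (hasDerivAt_pow 2 y).congr_of_eventuallyEq h
  · rw [hasDerivAt_iff_isLittleO_nhds_zero]
    simp only [zero_add, min_self, ne_eq, OfNat.ofNat_ne_zero, not_false_eq_true, zero_pow,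
      mul_zero, smul_zero, sub_zero]
    refine Asymptotics.IsBigO.trans_isLittleO (g := fun h : ℝ => h ^ 2) ?_
      (Asymptotics.isLittleO_pow_id (by norm_num))
    refine Asymptotics.IsBigO.of_bound 1 (Eventually.of_forall fun h => ?_)
    rw [norm_pow, norm_pow, one_mul]
    gcongr
    rcases le_total h 0 with h' | h' <;> simp [h']
  · have h : (fun z : ℝ => min z 0 ^ 2) =ᶠ[𝓝 y] fun _ => 0 := by
      filter_upwards [Ioi_mem_nhds hy] with z (hz : 0 < z) using by simp [min_eq_right hz.le]
    simpa [min_eq_right hy.le] using (hasDerivAt_const y (0:ℝ)).congr_of_eventuallyEq h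

lemma min_zero_mul_self (x : ℝ) : min x 0 * x = min x 0 ^ 2 := by
  rcases le_total x 0 with h | h <;> simp [h, sq]

lemma mul_min_zero_add_min_zero_le_mul {x y B : ℝ} (hx : |x| ≤ B) (hy : |y| ≤ B) :
    B * (min x 0 + min y 0) ≤ x * y := by
  rw [abs_le] at hx hy
  rcases le_total x 0 with h | h <;> rcases le_total y 0 with h' | h' <;>
    simp only [h, h', min_eq_left, min_eq_right] <;> nlinarith

lemma nonpos_of_hasDerivAt_le_mul {E E' : ℝ → ℝ} {K a b : ℝ} (hE : ContinuousOn E (Icc a b))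
    (hE' : ∀ t ∈ Ioo a b, HasDerivAt E (E' t) t) (hle : ∀ t ∈ Ioo a b, E' t ≤ K * E t)
    (ha : E a ≤ 0) {t : ℝ} (ht : t ∈ Icc a b) : E t ≤ 0 := by
  have hanti : AntitoneOn (fun t => Real.exp (-(K * t)) * E t) (Icc a b) := by
    refine antitoneOn_of_hasDerivWithinAt_nonpos
      (f' := fun t => Real.exp (-(K * t)) * (E' t - K * E t)) (convex_Icc a b) (by fun_prop)
      (fun s hs => ?_) (fun s hs => ?_) <;> rw [interior_Icc] at *
    · have hexp : HasDerivAt (fun t => Real.exp (-(K * t))) (Real.exp (-(K * s)) * -K) s := by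
        simpa using ((hasDerivAt_id s).const_mul K).neg.exp
      exact ((hexp.mul (hE' s hs)).congr_deriv (by ring)).hasDerivWithinAt
    · exact mul_nonpos_of_nonneg_of_nonpos (Real.exp_pos _).le (by linarith [hle s hs])
  have h := hanti ⟨le_rfl, ht.1.trans ht.2⟩ ht ht.1
  have ha' : Real.exp (-(K * a)) * E a ≤ 0 :=
    mul_nonpos_of_nonneg_of_nonpos (Real.exp_pos _).le ha
  exact nonpos_of_mul_nonpos_right (h.trans ha') (Real.exp_pos _)

lemma hasDerivAt_of_eq_add_integral {y g : ℝ → ℝ} {a τ : ℝ} (hg : ContinuousOn g (Ici a))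
    (hy : ∀ t, a ≤ t → y t = y a + ∫ s in a..t, g s) (hτ : a < τ) : HasDerivAt y (g τ) τ := by
  have hmem : Ici a ∈ 𝓝 τ := Ici_mem_nhds hτ
  have hint : IntervalIntegrable g volume a τ :=
    (hg.mono (by rw [uIcc_of_le hτ.le]; exact Icc_subset_Ici_self)).intervalIntegrable
  refine ((integral_hasDerivAt_right hint ?_ (hg.continuousAt hmem)).const_add (y a))
    |>.congr_of_eventuallyEq ?_
  · exact (hg.mono Ioi_subset_Ici_self).stronglyMeasurableAtFilter isOpen_Ioi τ hτ
  · filter_upwards [hmem] with t ht using hy t ht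

lemma eq_add_integral_of_hasDerivAt {y g : ℝ → ℝ} {a t : ℝ} (hy : ContinuousOn y (Ici a))
    (hg : ContinuousOn g (Ici a)) (hd : ∀ τ, a < τ → HasDerivAt y (g τ) τ) (ht : a ≤ t) :
    y t = y a + ∫ s in a..t, g s := by
  rw [integral_eq_sub_of_hasDerivAt_of_le ht (hy.mono Icc_subset_Ici_self) (fun τ hτ => hd τ hτ.1)
    (hg.mono (by rw [uIcc_of_le ht]; exact Icc_subset_Ici_self)).intervalIntegrable]
  ring

lemma integrableOn_Ioi_of_intervalIntegral_le {f : ℝ → ℝ} {a C : ℝ} (hf : ContinuousOn f (Ici a))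
    (hf₀ : ∀ t, a ≤ t → 0 ≤ f t) (hC : ∀ t, a ≤ t → ∫ s in a..t, f s ≤ C) :
    IntegrableOn f (Ioi a) := by
  refine integrableOn_Ioi_of_intervalIntegral_norm_bounded C a
    (fun t => ((hf.mono Icc_subset_Ici_self).integrableOn_Icc).mono_set Ioc_subset_Icc_self)
    tendsto_id ?_
  filter_upwards [eventually_ge_atTop a] with t ht
  rw [integral_congr fun s hs => Real.norm_of_nonneg (hf₀ s (uIcc_of_le ht ▸ hs).1)]
  exact hC t ht

lemma seir_deriv_sum_sq_min_zero_le {β η γ B x₁ x₂ x₃ : ℝ} (hβ : 0 ≤ β) (hβB : β ≤ B)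
    (hη : 0 ≤ η) (hγ : 0 ≤ γ) (h₁ : |x₁| ≤ B) (h₃ : |x₃| ≤ B) :
    2 * min x₁ 0 * -(β * x₁ * x₃) + 2 * min x₂ 0 * (β * x₁ * x₃ - η * x₂) +
        2 * min x₃ 0 * (η * x₂ - γ * x₃) ≤
      (3 * B ^ 2 + η) * (min x₁ 0 ^ 2 + min x₂ 0 ^ 2 + min x₃ 0 ^ 2) := by
  have hB : 0 ≤ B := hβ.trans hβB
  have hx₃ : -B ≤ x₃ := (abs_le.mp h₃).1
  have hx₁x₃ := mul_min_zero_add_min_zero_le_mul h₁ h₃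
  have hm₂x₂ : min x₂ 0 ≤ x₂ := min_le_left x₂ 0
  have hm₂ : min x₂ 0 ≤ 0 := min_le_right x₂ 0
  have hm₃ : min x₃ 0 ≤ 0 := min_le_right x₃ 0
  rw [show 2 * min x₁ 0 * -(β * x₁ * x₃) + 2 * min x₂ 0 * (β * x₁ * x₃ - η * x₂) +
        2 * min x₃ 0 * (η * x₂ - γ * x₃) = -2 * β * min x₁ 0 ^ 2 * x₃ +
          2 * β * min x₂ 0 * (x₁ * x₃) - 2 * η * min x₂ 0 ^ 2 + 2 * η * min x₃ 0 * x₂ -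
          2 * γ * min x₃ 0 ^ 2 by
    linear_combination (-2 * β * x₃) * min_zero_mul_self x₁ + (-2 * η) * min_zero_mul_self x₂ +
      (-2 * γ) * min_zero_mul_self x₃]
  generalize min x₁ 0 = m₁ at *
  generalize min x₂ 0 = m₂ at *
  generalize min x₃ 0 = m₃ at *
  generalize x₁ * x₃ = p at *
  have hβB' : β * B ≤ B ^ 2 := by nlinarith
  linarith [mul_nonneg (mul_nonneg hβ (sq_nonneg m₁)) (by linarith : 0 ≤ x₃ + B),
    mul_nonneg (mul_nonneg hβ (neg_nonneg.mpr hm₂)) (by linarith : 0 ≤ p - B * (m₁ + m₃)),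
    mul_nonneg (mul_nonneg hη (neg_nonneg.mpr hm₃)) (by linarith : 0 ≤ x₂ - m₂),
    mul_nonneg (mul_nonneg hβ hB) (sq_nonneg (m₁ - m₂)),
    mul_nonneg (mul_nonneg hβ hB) (sq_nonneg (m₃ - m₂)),
    mul_nonneg (mul_nonneg hβ hB) (sq_nonneg m₂), mul_nonneg (mul_nonneg hβ hB) (sq_nonneg m₃),
    mul_nonneg hη (sq_nonneg (m₃ - m₂)), mul_nonneg hη (sq_nonneg m₁), mul_nonneg hη (sq_nonneg m₂),
    mul_nonneg hγ (sq_nonneg m₃),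
    mul_le_mul_of_nonneg_right hβB'
      (add_nonneg (add_nonneg (sq_nonneg m₁) (sq_nonneg m₂)) (sq_nonneg m₃))]

namespace IsTraj

variable {η : ℝ} {u₁ u₂ x₁ x₂ x₃ : ℝ → ℝ}

lemma hasDerivAt (hx : IsTraj η u₁ u₂ x₁ x₂ x₃) (hu₁ : ContinuousOn u₁ (Ici 0))
    (hu₂ : ContinuousOn u₂ (Ici 0)) {τ : ℝ} (hτ : 0 < τ) :
    HasDerivAt x₁ (-(u₁ τ * x₁ τ * x₃ τ)) τ ∧
      HasDerivAt x₂ (u₁ τ * x₁ τ * x₃ τ - η * x₂ τ) τ ∧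
      HasDerivAt x₃ (η * x₂ τ - u₂ τ * x₃ τ) τ := by
  obtain ⟨h₁, h₂, h₃, hi₁, hi₂, hi₃⟩ := hx
  exact ⟨hasDerivAt_of_eq_add_integral (by fun_prop) hi₁ hτ,
    hasDerivAt_of_eq_add_integral (by fun_prop) hi₂ hτ,
    hasDerivAt_of_eq_add_integral (by fun_prop) hi₃ hτ⟩

theorem nonneg_s5 (hx : IsTraj η u₁ u₂ x₁ x₂ x₃) (hη : 0 ≤ η)
    (hu₁ : ContinuousOn u₁ (Ici 0)) (hu₂ : ContinuousOn u₂ (Ici 0))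
    (hu₁₀ : ∀ t, 0 ≤ t → 0 ≤ u₁ t) (hu₂₀ : ∀ t, 0 ≤ t → 0 ≤ u₂ t)
    (h₁ : 0 ≤ x₁ 0) (h₂ : 0 ≤ x₂ 0) (h₃ : 0 ≤ x₃ 0) {t : ℝ} (ht : 0 ≤ t) :
    0 ≤ x₁ t ∧ 0 ≤ x₂ t ∧ 0 ≤ x₃ t := by
  obtain ⟨B, hB⟩ := isCompact_Icc.exists_bound_of_continuousOn (s := Icc 0 t)
    (f := fun s => |u₁ s| + |x₁ s| + |x₃ s|)
    (((hu₁.abs.add hx.1.abs).add hx.2.2.1.abs).mono Icc_subset_Ici_self)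
  have hbound : ∀ s ∈ Icc 0 t, |u₁ s| ≤ B ∧ |x₁ s| ≤ B ∧ |x₃ s| ≤ B := fun s hs => by
    have := (le_abs_self _).trans (hB s hs)
    refine ⟨?_, ?_, ?_⟩ <;> linarith [abs_nonneg (u₁ s), abs_nonneg (x₁ s), abs_nonneg (x₃ s)]
  have hE : min (x₁ t) 0 ^ 2 + min (x₂ t) 0 ^ 2 + min (x₃ t) 0 ^ 2 ≤ 0 := by
    refine nonpos_of_hasDerivAt_le_mul (K := 3 * B ^ 2 + η)
      (E := fun s => min (x₁ s) 0 ^ 2 + min (x₂ s) 0 ^ 2 + min (x₃ s) 0 ^ 2)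
      (E' := fun s => 2 * min (x₁ s) 0 * -(u₁ s * x₁ s * x₃ s) +
        2 * min (x₂ s) 0 * (u₁ s * x₁ s * x₃ s - η * x₂ s) +
        2 * min (x₃ s) 0 * (η * x₂ s - u₂ s * x₃ s)) ?_ (fun s hs => ?_) (fun s hs => ?_)
      (by simp [h₁, h₂, h₃]) ⟨ht, le_rfl⟩
    · refine ContinuousOn.mono ?_ Icc_subset_Ici_self
      have := hx.1; have := hx.2.1; have := hx.2.2.1
      fun_prop
    · obtain ⟨d₁, d₂, d₃⟩ := hx.hasDerivAt hu₁ hu₂ hs.1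
      exact (((hasDerivAt_min_zero_sq _).comp s d₁).add ((hasDerivAt_min_zero_sq _).comp s d₂)).add
        ((hasDerivAt_min_zero_sq _).comp s d₃)
    · obtain ⟨hu, hx₁, hx₃⟩ := hbound s (Ioo_subset_Icc_self hs)
      exact seir_deriv_sum_sq_min_zero_le (hu₁₀ s hs.1.le) ((le_abs_self _).trans hu) hη
        (hu₂₀ s hs.1.le) hx₁ hx₃
  have hsq := fun y : ℝ => sq_nonneg (min y 0)
  simp only [← min_eq_right_iff]
  refine ⟨?_, ?_, ?_⟩ <;> refine (pow_eq_zero_iff two_ne_zero).mp ?_ <;>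
    linarith [hsq (x₁ t), hsq (x₂ t), hsq (x₃ t)]

variable {β γ : ℝ}

lemma x₁_add_x₂_eq (hx : IsTraj η (fun _ => β) (fun _ => γ) x₁ x₂ x₃) {t : ℝ}
    (ht : 0 ≤ t) : x₁ t + x₂ t = x₁ 0 + x₂ 0 - η * ∫ s in (0:ℝ)..t, x₂ s := by
  have hd := fun τ (hτ : 0 < τ) => hx.hasDerivAt continuousOn_const continuousOn_const hτ
  have h := eq_add_integral_of_hasDerivAt (hx.1.add hx.2.1) (g := fun s => -η * x₂ s)
    (continuousOn_const.mul hx.2.1)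
    (fun τ hτ => ((hd τ hτ).1.add (hd τ hτ).2.1).congr_deriv (by ring)) ht
  simp only [Pi.add_apply, intervalIntegral.integral_const_mul] at h
  linarith

lemma x₁_add_x₂_add_x₃_eq (hx : IsTraj η (fun _ => β) (fun _ => γ) x₁ x₂ x₃) {t : ℝ}
    (ht : 0 ≤ t) :
    x₁ t + x₂ t + x₃ t = x₁ 0 + x₂ 0 + x₃ 0 - γ * ∫ s in (0:ℝ)..t, x₃ s := by
  have hd := fun τ (hτ : 0 < τ) => hx.hasDerivAt continuousOn_const continuousOn_const hτ
  have h := eq_add_integral_of_hasDerivAt ((hx.1.add hx.2.1).add hx.2.2.1)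
    (g := fun s => -γ * x₃ s) (continuousOn_const.mul hx.2.2.1)
    (fun τ hτ => (((hd τ hτ).1.add (hd τ hτ).2.1).add (hd τ hτ).2.2).congr_deriv (by ring)) ht
  simp only [Pi.add_apply, intervalIntegral.integral_const_mul] at h
  linarith

lemma integrableOn_x₂ (hx : IsTraj η (fun _ => β) (fun _ => γ) x₁ x₂ x₃) (hη : 0 < η)
    (hnn : ∀ t, 0 ≤ t → 0 ≤ x₁ t ∧ 0 ≤ x₂ t ∧ 0 ≤ x₃ t) : IntegrableOn x₂ (Ioi 0) := by
  refine integrableOn_Ioi_of_intervalIntegral_le (C := (x₁ 0 + x₂ 0) / η) hx.2.1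
    (fun t ht => (hnn t ht).2.1) fun t ht => ?_
  rw [le_div_iff₀' hη]
  linarith [hx.x₁_add_x₂_eq ht, hnn t ht]

lemma integrableOn_x₃ (hx : IsTraj η (fun _ => β) (fun _ => γ) x₁ x₂ x₃) (hγ : 0 < γ)
    (hnn : ∀ t, 0 ≤ t → 0 ≤ x₁ t ∧ 0 ≤ x₂ t ∧ 0 ≤ x₃ t) : IntegrableOn x₃ (Ioi 0) := by
  refine integrableOn_Ioi_of_intervalIntegral_le (C := (x₁ 0 + x₂ 0 + x₃ 0) / γ) hx.2.2.1
    (fun t ht => (hnn t ht).2.2) fun t ht => ?_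
  rw [le_div_iff₀' hγ]
  linarith [hx.x₁_add_x₂_add_x₃_eq ht, hnn t ht]

lemma tendsto_x₂_add_x₃ (hx : IsTraj η (fun _ => β) (fun _ => γ) x₁ x₂ x₃) (hη : 0 < η)
    (hγ : 0 < γ) (hnn : ∀ t, 0 ≤ t → 0 ≤ x₁ t ∧ 0 ≤ x₂ t ∧ 0 ≤ x₃ t) :
    Tendsto (fun t => x₂ t + x₃ t) atTop (𝓝 0) := by
  have hx₂ := hx.integrableOn_x₂ hη hnn
  have hx₃ := hx.integrableOn_x₃ hγ hnn
  have hx₁x₃ : IntegrableOn (fun t => β * x₁ t * x₃ t) (Ioi 0) := by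
    refine hx₃.bdd_mul (c := |β| * (x₁ 0 + x₂ 0))
      ((continuousOn_const.mul hx.1).mono Ioi_subset_Ici_self |>.aestronglyMeasurable
        measurableSet_Ioi) (ae_restrict_of_forall_mem measurableSet_Ioi fun t (ht : 0 < t) => ?_)
    have hG : 0 ≤ ∫ s in (0:ℝ)..t, x₂ s := integral_nonneg ht.le fun s hs => (hnn s hs.1).2.1
    rw [norm_mul, Real.norm_eq_abs, Real.norm_of_nonneg (hnn t ht.le).1]
    gcongr
    nlinarith [hx.x₁_add_x₂_eq ht.le, hnn t ht.le]
  have hd := fun τ (hτ : 0 < τ) => hx.hasDerivAt continuousOn_const continuousOn_const hτ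
  exact tendsto_zero_of_hasDerivAt_of_integrableOn_Ioi (fun τ hτ => (hd τ hτ).2.1.add (hd τ hτ).2.2)
    ((hx₁x₃.sub (hx₂.const_mul η)).add ((hx₂.const_mul η).sub (hx₃.const_mul γ))) (hx₂.add hx₃)

end IsTraj

theorem nominal_integral_of_x3_general
    (η βmin βnom γnom Imax : ℝ)
    (hη : 0 < η) (hβm : 0 < βmin) (hβ : βmin < βnom)
    (hγn : 0 < γnom)
    (a b c : ℝ) (hx0 : InXM η βnom γnom Imax a b c)
    (x₁ x₂ x₃ : ℝ → ℝ)
    (hx : IsTraj η (fun _ => βnom) (fun _ => γnom) x₁ x₂ x₃)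
    (ha : x₁ 0 = a) (hb : x₂ 0 = b) (hc : x₃ 0 = c) :
    ∃ xinf : ℝ, Tendsto x₁ atTop (𝓝 xinf) ∧
      IntegrableOn x₃ (Ioi 0) ∧
      ∫ t in Ioi (0:ℝ), x₃ t = (a - xinf + b + c) / γnom := by
  obtain ⟨⟨⟨ha₀, -⟩, ⟨hb₀, -⟩, ⟨hc₀, -⟩, -⟩, -⟩ := hx0
  subst ha hb hc
  have hnn := fun t (ht : 0 ≤ t) => hx.nonneg_s5 hη.le continuousOn_const continuousOn_const
    (fun _ _ => (hβm.trans hβ).le) (fun _ _ => hγn.le) ha₀ hb₀ hc₀ ht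
  have hx₃ := hx.integrableOn_x₃ hγn hnn
  have hlim := (((intervalIntegral_tendsto_integral_Ioi 0 hx₃ tendsto_id).const_mul γnom).const_sub
    (x₁ 0 + x₂ 0 + x₃ 0)).sub (hx.tendsto_x₂_add_x₃ hη hγn hnn)
  rw [sub_zero] at hlim
  refine ⟨_, hlim.congr' ?_, hx₃, by field_simp; ring⟩
  filter_upwards [eventually_ge_atTop 0] with t ht
  rw [id, ← hx.x₁_add_x₂_add_x₃_eq ht]
  ring

/-- along the nominal trajectory from `X_M`, `x₁(t)` converges and
`∫₀^∞ x₃ = (x₁⁰ - x₁^∞ + x₂⁰ + x₃⁰)/γnom` (in particular the integral is finite). -/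
theorem nominal_integral_of_x3
    (η βmin βnom γnom γmax Imax : ℝ)
    (hη : 0 < η) (hβm : 0 < βmin) (hβ : βmin < βnom)
    (hγn : 0 < γnom) (hγ : γnom < γmax) (hIm : 0 < Imax) (hIm1 : Imax ≤ 1)
    (a b c : ℝ) (hx0 : InXM η βnom γnom Imax a b c)
    (x₁ x₂ x₃ : ℝ → ℝ)
    (hx : IsTraj η (fun _ => βnom) (fun _ => γnom) x₁ x₂ x₃)
    (ha : x₁ 0 = a) (hb : x₂ 0 = b) (hc : x₃ 0 = c) :
    ∃ xinf : ℝ, Tendsto x₁ atTop (𝓝 xinf) ∧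
      IntegrableOn x₃ (Ioi 0) ∧
      ∫ t in Ioi (0:ℝ), x₃ t = (a - xinf + b + c) / γnom :=
  nominal_integral_of_x3_general η βmin βnom γnom Imax hη hβm hβ hγn a b c hx0 x₁ x₂ x₃ hx ha hb hc
end
end

section
/- For every initial state x⁰ ∈ X, every control u, and every δ > 0, the finite-horizon cost satisfies ∫₀^δ ℓ(x(s; x⁰, u), u(s)) ds ≥ e^{−2δ·max{η, γ_max}} · δ · λ ((x₂⁰)² + (x₃⁰)²); consequently δ ℓ*(x⁰) ≤ e^{2δ·max{η, γ_max}} V_δ(x⁰). -/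
open MeasureTheory Set Filter Topology
open scoped ENNReal

noncomputable section

/-!
Along any trajectory issued from a nonnegative state, the three components stay nonnegative:
wherever a component is nonpositive its rate is bounded below by `-K n`, where `n` is the sum
of the negative parts of the components, so comparing on the last interval on which the
component is negative gives `n t ≤ 3 K ∫₀ᵗ n`, and Grönwall forces `n = 0`. Once the state is
nonnegative, `ẋ₂ ≥ -η x₂` and `ẋ₃ ≥ -γmax x₃`, so `xᵢ t ≥ xᵢ 0 e^{-M t}` with
`M = max η γmax`. Hence the stage cost is at least `λ e^{-2 M δ} ((x₂⁰)² + (x₃⁰)²)` on `(0, δ]`,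
which integrates to the first bound; taking the infimum over admissible controls gives the
second.
-/

theorem exists_last_nonneg {z : ℝ → ℝ} {a b : ℝ} (hz : ContinuousOn z (Icc a b)) (hab : a ≤ b)
    (ha : 0 ≤ z a) : ∃ σ ∈ Icc a b, 0 ≤ z σ ∧ ∀ r ∈ Ioc σ b, z r < 0 := by
  have hS : IsCompact (Icc a b ∩ z ⁻¹' Ici 0) :=
    isCompact_Icc.of_isClosed_subset (hz.preimage_isClosed_of_isClosed isClosed_Icc isClosed_Ici)
      inter_subset_left
  obtain ⟨σ, ⟨hσ, hzσ⟩, hmax⟩ := hS.exists_isGreatest ⟨a, ⟨left_mem_Icc.2 hab, ha⟩⟩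
  refine ⟨σ, hσ, hzσ, fun r hr => lt_of_not_ge fun hzr => ?_⟩
  exact (hmax ⟨⟨hσ.1.trans hr.1.le, hr.2⟩, hzr⟩).not_gt hr.1

theorem neg_le_integral_of_eq_add_integral {z F g : ℝ → ℝ} {T : ℝ}
    (hz : ContinuousOn z (Icc 0 T)) (hF : IntervalIntegrable F volume 0 T)
    (hg : IntervalIntegrable g volume 0 T) (hzF : ∀ t ∈ Icc 0 T, z t = z 0 + ∫ r in 0..t, F r)
    (hz₀ : 0 ≤ z 0) (hg₀ : ∀ r ∈ Ioc 0 T, 0 ≤ g r)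
    (hFg : ∀ r ∈ Ioo 0 T, z r < 0 → -g r ≤ F r) :
    ∀ t ∈ Icc 0 T, -z t ≤ ∫ r in 0..t, g r := by
  intro t ht
  have hsub : ∀ {c d}, c ∈ Icc 0 t → d ∈ Icc 0 t → uIcc c d ⊆ uIcc 0 T := fun hc hd =>
    uIcc_subset_uIcc (Icc_subset_uIcc ⟨hc.1, hc.2.trans ht.2⟩)
      (Icc_subset_uIcc ⟨hd.1, hd.2.trans ht.2⟩)
  obtain ⟨σ, hσ, hzσ, hlast⟩ :=
    exists_last_nonneg (hz.mono (Icc_subset_Icc_right ht.2)) ht.1 hz₀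
  have h0 : (0 : ℝ) ∈ Icc 0 t := left_mem_Icc.2 ht.1
  have ht' : t ∈ Icc 0 t := right_mem_Icc.2 ht.1
  have hincr : z t - z σ = ∫ r in σ..t, F r := by
    rw [hzF t ht, hzF σ ⟨hσ.1, hσ.2.trans ht.2⟩, add_sub_add_left_eq_sub,
      intervalIntegral.integral_interval_sub_left (hF.mono_set (hsub h0 ht'))
        (hF.mono_set (hsub h0 hσ))]
  have hFσt : -∫ r in σ..t, g r ≤ ∫ r in σ..t, F r := by
    rw [← intervalIntegral.integral_neg]
    exact intervalIntegral.integral_mono_on_of_le_Ioo hσ.2 (hg.mono_set (hsub hσ ht')).neg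
      (hF.mono_set (hsub hσ ht')) fun r hr =>
        hFg r ⟨hσ.1.trans_lt hr.1, hr.2.trans_le ht.2⟩ (hlast r ⟨hr.1, hr.2.le⟩)
  have hgσt : ∫ r in σ..t, g r ≤ ∫ r in 0..t, g r :=
    intervalIntegral.integral_mono_interval hσ.1 hσ.2 le_rfl
      ((ae_restrict_iff' measurableSet_Ioc).2 <|
        ae_of_all _ fun r hr => hg₀ r ⟨hr.1, hr.2.trans ht.2⟩)
      (hg.mono_set (hsub h0 ht'))
  linarith

theorem mul_exp_neg_mul_le_of_eq_add_integral {z F : ℝ → ℝ} {κ T : ℝ} (hκ : 0 ≤ κ)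
    (hz : ContinuousOn z (Icc 0 T)) (hF : IntervalIntegrable F volume 0 T)
    (hzF : ∀ t ∈ Icc 0 T, z t = z 0 + ∫ r in 0..t, F r) (hFz : ∀ r ∈ Ioo 0 T, -κ * z r ≤ F r) :
    ∀ t ∈ Icc 0 T, z 0 * Real.exp (-κ * t) ≤ z t := by
  set e : ℝ → ℝ := fun r => z 0 * Real.exp (-κ * r)
  have he : Continuous e := by fun_prop
  have he' : ∀ r, HasDerivAt (fun r => -e r) (κ * e r) r := fun r => by
    refine ((((hasDerivAt_id r).const_mul (-κ)).exp.const_mul (z 0)).neg).congr_deriv ?_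
    simp only [e, id]; ring
  have hdiff := neg_le_integral_of_eq_add_integral (z := fun r => z r - e r)
    (F := fun r => F r + κ * e r) (g := 0) (hz.sub he.continuousOn)
    (hF.add ((he.const_mul κ).intervalIntegrable 0 T)) intervalIntegrable_const
    ?_ (by simp [e]) (fun _ _ => le_rfl) ?_
  · intro t ht
    simpa [e] using hdiff t ht
  · intro t ht
    have hFt : IntervalIntegrable F volume 0 t :=
      hF.mono_set (uIcc_subset_uIcc_left (Icc_subset_uIcc ⟨ht.1, ht.2⟩))
    rw [intervalIntegral.integral_add hFt ((he.const_mul κ).intervalIntegrable 0 t),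
      intervalIntegral.integral_eq_sub_of_hasDerivAt (fun r _ => he' r)
        ((he.const_mul κ).intervalIntegrable 0 t), hzF t ht]
    simp only [e, mul_zero, Real.exp_zero]
    ring
  · intro r hr hneg
    have := hFz r hr
    simp only [Pi.zero_apply, neg_zero]
    nlinarith

theorem eq_zero_of_le_mul_integral {n : ℝ → ℝ} {K T : ℝ} (hn : ContinuousOn n (Ici 0))
    (hn₀ : ∀ t ∈ Icc 0 T, 0 ≤ n t) (hnK : ∀ t ∈ Icc 0 T, n t ≤ K * ∫ r in 0..t, n r) :
    ∀ t ∈ Icc 0 T, n t = 0 := by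
  intro t ht
  have hint : ∀ s, 0 ≤ s → IntervalIntegrable n volume 0 s := fun s hs =>
    (hn.mono (by rw [uIcc_of_le hs]; exact Icc_subset_Ici_self)).intervalIntegrable
  have hN₀ : ∀ s ∈ Icc 0 t, 0 ≤ ∫ r in 0..s, n r := fun s hs =>
    intervalIntegral.integral_nonneg hs.1 fun r hr => hn₀ r ⟨hr.1, hr.2.trans (hs.2.trans ht.2)⟩
  have hN : ∀ s ∈ Icc 0 t, ∫ r in 0..s, n r = 0 := by
    refine eq_zero_of_abs_deriv_le_mul_abs_self_of_eq_zero_right (f' := n) (K := K) ?_ ?_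
      intervalIntegral.integral_same ?_
    · simpa only [uIcc_of_le ht.1] using
        intervalIntegral.continuousOn_primitive_interval' (hint t ht.1) left_mem_uIcc
    · intro s hs
      exact intervalIntegral.integral_hasDerivWithinAt_right (hint s hs.1)
        ((hn.mono fun r hr => hs.1.trans (le_of_lt hr)).stronglyMeasurableAtFilter_nhdsWithin
          measurableSet_Ioi s)
        ((hn s hs.1).mono fun r hr => hs.1.trans (le_of_lt hr))
    · intro s hs
      rw [Real.norm_of_nonneg (hn₀ s ⟨hs.1, hs.2.le.trans ht.2⟩),
        Real.norm_of_nonneg (hN₀ s (Ico_subset_Icc_self hs))]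
      exact hnK s ⟨hs.1, hs.2.le.trans ht.2⟩
  have := hnK t ht
  rw [hN t (right_mem_Icc.2 ht.1), mul_zero] at this
  exact le_antisymm this (hn₀ t ht)

theorem neg_mul_le_mul_of_abs_le {a c B n : ℝ} (ha : |a| ≤ B) (hc : |c| ≤ B) (hn : 0 ≤ n)
    (hna : -a ≤ n) (hnc : -c ≤ n) : -(B * n) ≤ a * c := by
  obtain ⟨ha₁, ha₂⟩ := abs_le.1 ha
  obtain ⟨hc₁, hc₂⟩ := abs_le.1 hc
  rcases le_total 0 a with h₁ | h₁ <;> rcases le_total 0 c with h₃ | h₃ <;> nlinarith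

theorem seir_rates_ge {η β B v₁ v₂ a b c : ℝ} (hv₁ : v₁ ∈ Icc 0 β) (hv₂ : 0 ≤ v₂) (hη : 0 ≤ η)
    (ha : |a| ≤ B) (hc : |c| ≤ B) :
    let n := max (-a) 0 + max (-b) 0 + max (-c) 0
    (a ≤ 0 → -((β * B + η) * n) ≤ -(v₁ * a * c)) ∧
    (b ≤ 0 → -((β * B + η) * n) ≤ v₁ * a * c - η * b) ∧
    (c ≤ 0 → -((β * B + η) * n) ≤ η * b - v₂ * c) := by
  intro n
  have hn : 0 ≤ n := by positivity
  have hna : -a ≤ n := by linarith [le_max_left (-a) 0, le_max_right (-b) 0, le_max_right (-c) 0]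
  have hnb : -b ≤ n := by linarith [le_max_right (-a) 0, le_max_left (-b) 0, le_max_right (-c) 0]
  have hnc : -c ≤ n := by linarith [le_max_right (-a) 0, le_max_right (-b) 0, le_max_left (-c) 0]
  obtain ⟨hv₁₀, hv₁β⟩ := hv₁
  have hB : 0 ≤ B := (abs_nonneg _).trans ha
  have hβBn : v₁ * (B * n) ≤ β * (B * n) := mul_le_mul_of_nonneg_right hv₁β (mul_nonneg hB hn)
  have hηn : 0 ≤ η * n := mul_nonneg hη hn
  refine ⟨fun h => ?_, fun h => ?_, fun h => ?_⟩
  · have hac : -a * -c ≤ n * B :=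
      (mul_le_mul_of_nonneg_left ((neg_le_abs c).trans hc) (neg_nonneg.2 h)).trans
        (mul_le_mul_of_nonneg_right hna hB)
    nlinarith [mul_le_mul_of_nonneg_left hac hv₁₀]
  · have := mul_le_mul_of_nonneg_left (neg_mul_le_mul_of_abs_le ha hc hn hna hnc) hv₁₀
    nlinarith
  · nlinarith [mul_nonneg hv₂ (neg_nonneg.2 h), mul_nonneg (hv₁₀.trans hv₁β) (mul_nonneg hB hn)]

theorem Measurable.intervalIntegrable_of_mem_Icc {f : ℝ → ℝ} {a b T : ℝ} (hf : Measurable f)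
    (hT : 0 ≤ T) (hab : ∀ t, 0 ≤ t → f t ∈ Icc a b) : IntervalIntegrable f volume 0 T :=
  IntervalIntegrable.mono_fun' (g := fun _ => |a| ⊔ |b|) intervalIntegrable_const
    hf.aestronglyMeasurable <|
    (ae_restrict_iff' measurableSet_uIoc).2 <| ae_of_all _ fun t ht => by
      rw [uIoc_of_le hT] at ht
      exact abs_le_max_abs_abs (hab t ht.1.le).1 (hab t ht.1.le).2

section SEIR

variable {η βmin βnom γnom γmax : ℝ} {u₁ u₂ x₁ x₂ x₃ : ℝ → ℝ} {T : ℝ}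

theorem IsTraj.intervalIntegrable_infection (hu : IsCtrl βmin βnom γnom γmax u₁ u₂)
    (hx : IsTraj η u₁ u₂ x₁ x₂ x₃) (hT : 0 ≤ T) :
    IntervalIntegrable (fun s => u₁ s * x₁ s * x₃ s) volume 0 T := by
  have hsub : uIcc 0 T ⊆ Ici 0 := by rw [uIcc_of_le hT]; exact Icc_subset_Ici_self
  exact ((hu.1.intervalIntegrable_of_mem_Icc hT fun t ht => (hu.2.2 t ht).1).mul_continuousOn
    (hx.1.mono hsub)).mul_continuousOn (hx.2.2.1.mono hsub)

theorem IsTraj.intervalIntegrable_removal (hu : IsCtrl βmin βnom γnom γmax u₁ u₂)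
    (hx : IsTraj η u₁ u₂ x₁ x₂ x₃) (hT : 0 ≤ T) :
    IntervalIntegrable (fun s => u₂ s * x₃ s) volume 0 T := by
  have hsub : uIcc 0 T ⊆ Ici 0 := by rw [uIcc_of_le hT]; exact Icc_subset_Ici_self
  exact (hu.2.1.intervalIntegrable_of_mem_Icc hT fun t ht => (hu.2.2 t ht).2).mul_continuousOn
    (hx.2.2.1.mono hsub)

theorem IsTraj.intervalIntegrable_progression (hx : IsTraj η u₁ u₂ x₁ x₂ x₃) (hT : 0 ≤ T) :
    IntervalIntegrable (fun s => η * x₂ s) volume 0 T :=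
  ((hx.2.1.mono (by rw [uIcc_of_le hT]; exact Icc_subset_Ici_self)).const_smul η).intervalIntegrable

theorem IsTraj.exists_rates_ge (hu : IsCtrl βmin βnom γnom γmax u₁ u₂)
    (hx : IsTraj η u₁ u₂ x₁ x₂ x₃) (hβmin : 0 ≤ βmin) (hγnom : 0 ≤ γnom) (hη : 0 ≤ η)
    {t : ℝ} (ht : 0 ≤ t) :
    ∃ K, 0 ≤ K ∧ ∀ r ∈ Ioo 0 t,
      let n := max (-x₁ r) 0 + max (-x₂ r) 0 + max (-x₃ r) 0
      (x₁ r ≤ 0 → -(K * n) ≤ -(u₁ r * x₁ r * x₃ r)) ∧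
      (x₂ r ≤ 0 → -(K * n) ≤ u₁ r * x₁ r * x₃ r - η * x₂ r) ∧
      (x₃ r ≤ 0 → -(K * n) ≤ η * x₂ r - u₂ r * x₃ r) := by
  obtain ⟨B, hB⟩ := isCompact_Icc.exists_bound_of_continuousOn
    ((hx.1.prodMk hx.2.2.1).mono (Icc_subset_Ici_self : Icc 0 t ⊆ Ici 0))
  have hβ := (hu.2.2 0 le_rfl).1
  have hB₀ := (norm_nonneg _).trans (hB 0 (left_mem_Icc.2 ht))
  refine ⟨βnom * B + η, add_nonneg (mul_nonneg (hβmin.trans (hβ.1.trans hβ.2)) hB₀) hη,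
    fun r hr => ?_⟩
  have hBr := norm_prod_le_iff.1 (hB r (Ioo_subset_Icc_self hr))
  obtain ⟨⟨hu₁min, hu₁nom⟩, hu₂nom, -⟩ := hu.2.2 r hr.1.le
  exact seir_rates_ge ⟨hβmin.trans hu₁min, hu₁nom⟩ (hγnom.trans hu₂nom) hη hBr.1 hBr.2

theorem IsTraj.nonneg_s10 (hu : IsCtrl βmin βnom γnom γmax u₁ u₂) (hx : IsTraj η u₁ u₂ x₁ x₂ x₃)
    (hβmin : 0 ≤ βmin) (hγnom : 0 ≤ γnom) (hη : 0 ≤ η)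
    (h₁ : 0 ≤ x₁ 0) (h₂ : 0 ≤ x₂ 0) (h₃ : 0 ≤ x₃ 0) {t : ℝ} (ht : 0 ≤ t) :
    0 ≤ x₁ t ∧ 0 ≤ x₂ t ∧ 0 ≤ x₃ t := by
  have ⟨hc₁, hc₂, hc₃, hx₁, hx₂, hx₃⟩ := hx
  obtain ⟨K, hK, hrates⟩ := hx.exists_rates_ge hu hβmin hγnom hη ht
  set n : ℝ → ℝ := fun r => max (-x₁ r) 0 + max (-x₂ r) 0 + max (-x₃ r) 0
  have hn : ContinuousOn n (Ici 0) :=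
    ((ContinuousOn.sup hc₁.neg continuousOn_const).add
      (ContinuousOn.sup hc₂.neg continuousOn_const)).add
      (ContinuousOn.sup hc₃.neg continuousOn_const)
  have hn₀ : ∀ r, 0 ≤ n r := fun r => by positivity
  have hneg : ∀ {z F : ℝ → ℝ}, ContinuousOn z (Ici 0) → IntervalIntegrable F volume 0 t →
      (∀ s, 0 ≤ s → z s = z 0 + ∫ r in 0..s, F r) → 0 ≤ z 0 →
      (∀ r ∈ Ioo 0 t, z r ≤ 0 → -(K * n r) ≤ F r) →
      ∀ s ∈ Icc 0 t, max (-z s) 0 ≤ K * ∫ r in 0..s, n r := by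
    intro z F hz hF hzF hz₀ hFn s hs
    refine max_le ?_ (mul_nonneg hK (intervalIntegral.integral_nonneg hs.1 fun r _ => hn₀ r))
    rw [← intervalIntegral.integral_const_mul]
    exact neg_le_integral_of_eq_add_integral (hz.mono Icc_subset_Ici_self) hF
      ((hn.mono (by rw [uIcc_of_le ht]; exact Icc_subset_Ici_self)).const_smul K).intervalIntegrable
      (fun s hs => hzF s hs.1) hz₀ (fun r _ => mul_nonneg hK (hn₀ r))
      (fun r hr hzr => hFn r hr hzr.le) s hs
  have h₁' := hneg hc₁ (hx.intervalIntegrable_infection hu ht).neg hx₁ h₁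
    fun r hr => (hrates r hr).1
  have h₂' := hneg hc₂ ((hx.intervalIntegrable_infection hu ht).sub
    (hx.intervalIntegrable_progression ht)) hx₂ h₂ fun r hr => (hrates r hr).2.1
  have h₃' := hneg hc₃ ((hx.intervalIntegrable_progression ht).sub
    (hx.intervalIntegrable_removal hu ht)) hx₃ h₃ fun r hr => (hrates r hr).2.2
  have hn_zero := eq_zero_of_le_mul_integral (K := 3 * K) hn (fun s _ => hn₀ s)
    (fun s hs => by linarith [h₁' s hs, h₂' s hs, h₃' s hs]) t (right_mem_Icc.2 ht)
  simp only [n] at hn_zero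
  refine ⟨?_, ?_, ?_⟩ <;>
    linarith [le_max_left (-x₁ t) 0, le_max_left (-x₂ t) 0, le_max_left (-x₃ t) 0,
      le_max_right (-x₁ t) 0, le_max_right (-x₂ t) 0, le_max_right (-x₃ t) 0]

theorem IsTraj.mul_exp_neg_le (hu : IsCtrl βmin βnom γnom γmax u₁ u₂)
    (hx : IsTraj η u₁ u₂ x₁ x₂ x₃) (hβmin : 0 ≤ βmin) (hγnom : 0 ≤ γnom) (hη : 0 ≤ η)
    (h₁ : 0 ≤ x₁ 0) (h₂ : 0 ≤ x₂ 0) (h₃ : 0 ≤ x₃ 0) {t : ℝ} (ht : 0 ≤ t) :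
    x₂ 0 * Real.exp (-max η γmax * t) ≤ x₂ t ∧ x₃ 0 * Real.exp (-max η γmax * t) ≤ x₃ t := by
  have ⟨_, hc₂, hc₃, _, hx₂, hx₃⟩ := hx
  have hnn := fun s (hs : 0 ≤ s) => hx.nonneg_s10 hu hβmin hγnom hη h₁ h₂ h₃ hs
  have hM : 0 ≤ max η γmax := le_max_of_le_left hη
  constructor
  · refine mul_exp_neg_mul_le_of_eq_add_integral hM (hc₂.mono Icc_subset_Ici_self)
      ((hx.intervalIntegrable_infection hu ht).sub (hx.intervalIntegrable_progression ht))
      (fun s hs => hx₂ s hs.1) (fun r hr => ?_) t (right_mem_Icc.2 ht)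
    obtain ⟨hx₁r, hx₂r, hx₃r⟩ := hnn r hr.1.le
    have hinf : 0 ≤ u₁ r * x₁ r * x₃ r :=
      mul_nonneg (mul_nonneg (hβmin.trans (hu.2.2 r hr.1.le).1.1) hx₁r) hx₃r
    nlinarith [mul_le_mul_of_nonneg_right (le_max_left η γmax) hx₂r]
  · refine mul_exp_neg_mul_le_of_eq_add_integral hM (hc₃.mono Icc_subset_Ici_self)
      ((hx.intervalIntegrable_progression ht).sub (hx.intervalIntegrable_removal hu ht))
      (fun s hs => hx₃ s hs.1) (fun r hr => ?_) t (right_mem_Icc.2 ht)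
    obtain ⟨-, hx₂r, hx₃r⟩ := hnn r hr.1.le
    have hu₂ : u₂ r ≤ max η γmax := (hu.2.2 r hr.1.le).2.2.trans (le_max_right η γmax)
    nlinarith [mul_le_mul_of_nonneg_right hu₂ hx₃r, mul_nonneg hη hx₂r]

end SEIR

theorem le_stageCost {lam βnom γnom b c v₁ v₂ : ℝ} (hlam : lam ≤ 1) :
    lam * (b ^ 2 + c ^ 2) ≤ stageCost lam βnom γnom b c v₁ v₂ :=
  le_add_of_nonneg_right (mul_nonneg (sub_nonneg.2 hlam) (by positivity))

theorem lintegral_stageCost_ge {η βmin βnom γnom γmax lam δ : ℝ} {u₁ u₂ x₁ x₂ x₃ : ℝ → ℝ}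
    (hu : IsCtrl βmin βnom γnom γmax u₁ u₂) (hx : IsTraj η u₁ u₂ x₁ x₂ x₃) (hβmin : 0 ≤ βmin)
    (hγnom : 0 ≤ γnom) (hη : 0 ≤ η) (hlam₀ : 0 ≤ lam) (hlam₁ : lam ≤ 1)
    (h₁ : 0 ≤ x₁ 0) (h₂ : 0 ≤ x₂ 0) (h₃ : 0 ≤ x₃ 0) :
    ENNReal.ofReal (Real.exp (-(2 * δ * max η γmax)) * (δ * (lam * (x₂ 0 ^ 2 + x₃ 0 ^ 2)))) ≤
      ∫⁻ s in Ioc 0 δ, ENNReal.ofReal (stageCost lam βnom γnom (x₂ s) (x₃ s) (u₁ s) (u₂ s)) := by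
  set M := max η γmax
  set e := Real.exp (-M * δ)
  have he : Real.exp (-(2 * δ * M)) = e ^ 2 := by rw [← Real.exp_nat_mul]; ring_nf
  have hpt : ∀ s ∈ Ioc 0 δ,
      lam * ((x₂ 0 * e) ^ 2 + (x₃ 0 * e) ^ 2) ≤
        stageCost lam βnom γnom (x₂ s) (x₃ s) (u₁ s) (u₂ s) := by
    intro s hs
    obtain ⟨hl₂, hl₃⟩ := hx.mul_exp_neg_le hu hβmin hγnom hη h₁ h₂ h₃ hs.1.le
    have hes : e ≤ Real.exp (-M * s) :=
      Real.exp_le_exp.2 (mul_le_mul_of_nonpos_left hs.2 (neg_nonpos.2 (le_max_of_le_left hη)))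
    refine le_trans (mul_le_mul_of_nonneg_left (add_le_add ?_ ?_) hlam₀) (le_stageCost hlam₁)
    · exact pow_le_pow_left₀ (by positivity) ((mul_le_mul_of_nonneg_left hes h₂).trans hl₂) 2
    · exact pow_le_pow_left₀ (by positivity) ((mul_le_mul_of_nonneg_left hes h₃).trans hl₃) 2
  calc ENNReal.ofReal (Real.exp (-(2 * δ * M)) * (δ * (lam * (x₂ 0 ^ 2 + x₃ 0 ^ 2))))
      = ∫⁻ _ in Ioc 0 δ, ENNReal.ofReal (lam * ((x₂ 0 * e) ^ 2 + (x₃ 0 * e) ^ 2)) := by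
        rw [setLIntegral_const, Real.volume_Ioc, sub_zero, ← ENNReal.ofReal_mul (by positivity), he]
        ring_nf
    _ ≤ _ := setLIntegral_mono' measurableSet_Ioc fun s hs => ENNReal.ofReal_le_ofReal (hpt s hs)

theorem finite_horizon_cost_lower_bound_general
    (η βmin βnom γnom γmax Imax lam : ℝ)
    (hη : 0 < η) (hβm : 0 < βmin)
    (hγn : 0 < γnom)
    (hlam : lam ∈ Ioc (0:ℝ) 1)
    (a b c : ℝ) (hX : InX Imax a b c)
    (δ : ℝ) :
    (∀ u₁ u₂ x₁ x₂ x₃ : ℝ → ℝ,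
      IsCtrl βmin βnom γnom γmax u₁ u₂ →
      IsTraj η u₁ u₂ x₁ x₂ x₃ →
      x₁ 0 = a → x₂ 0 = b → x₃ 0 = c →
      ENNReal.ofReal
          (Real.exp (-(2 * δ * max η γmax)) * (δ * (lam * (b ^ 2 + c ^ 2)))) ≤
        ∫⁻ s in Ioc (0:ℝ) δ,
          ENNReal.ofReal (stageCost lam βnom γnom (x₂ s) (x₃ s) (u₁ s) (u₂ s))) ∧
    ENNReal.ofReal (δ * (lam * (b ^ 2 + c ^ 2))) ≤
      ENNReal.ofReal (Real.exp (2 * δ * max η γmax)) *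
        Vfin η βmin βnom γnom γmax Imax lam δ a b c := by
  obtain ⟨⟨ha, -⟩, ⟨hb, -⟩, ⟨hc, -⟩, -⟩ := hX
  have hV : ENNReal.ofReal (Real.exp (-(2 * δ * max η γmax)) * (δ * (lam * (b ^ 2 + c ^ 2)))) ≤
      Vfin η βmin βnom γnom γmax Imax lam δ a b c := by
    refine le_sInf ?_
    rintro _ ⟨u₁, u₂, x₁, x₂, x₃, hu, hx, rfl, rfl, rfl, -, rfl⟩
    exact lintegral_stageCost_ge hu hx hβm.le hγn.le hη.le hlam.1.le hlam.2 ha hb hc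
  refine ⟨?_, ?_⟩
  · rintro u₁ u₂ x₁ x₂ x₃ hu hx rfl rfl rfl
    exact lintegral_stageCost_ge hu hx hβm.le hγn.le hη.le hlam.1.le hlam.2 ha hb hc
  calc ENNReal.ofReal (δ * (lam * (b ^ 2 + c ^ 2)))
      = ENNReal.ofReal (Real.exp (2 * δ * max η γmax)) *
          ENNReal.ofReal (Real.exp (-(2 * δ * max η γmax)) * (δ * (lam * (b ^ 2 + c ^ 2)))) := by
        rw [← ENNReal.ofReal_mul (Real.exp_pos _).le, Real.exp_neg,
          mul_inv_cancel_left₀ (Real.exp_pos _).ne']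
    _ ≤ _ := by gcongr

/-- lower bound on the finite-horizon cost and the resulting
bound `δ ℓ*(x⁰) ≤ e^{2δ max{η,γmax}} V_δ(x⁰)`. -/
theorem finite_horizon_cost_lower_bound
    (η βmin βnom γnom γmax Imax lam : ℝ)
    (hη : 0 < η) (hβm : 0 < βmin) (hβ : βmin < βnom)
    (hγn : 0 < γnom) (hγ : γnom < γmax) (hIm : 0 < Imax) (hIm1 : Imax ≤ 1)
    (hlam : lam ∈ Ioc (0:ℝ) 1)
    (a b c : ℝ) (hX : InX Imax a b c)
    (δ : ℝ) (hδ : 0 < δ) :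
    (∀ u₁ u₂ x₁ x₂ x₃ : ℝ → ℝ,
      IsCtrl βmin βnom γnom γmax u₁ u₂ →
      IsTraj η u₁ u₂ x₁ x₂ x₃ →
      x₁ 0 = a → x₂ 0 = b → x₃ 0 = c →
      ENNReal.ofReal
          (Real.exp (-(2 * δ * max η γmax)) * (δ * (lam * (b ^ 2 + c ^ 2)))) ≤
        ∫⁻ s in Ioc (0:ℝ) δ,
          ENNReal.ofReal (stageCost lam βnom γnom (x₂ s) (x₃ s) (u₁ s) (u₂ s))) ∧
    ENNReal.ofReal (δ * (lam * (b ^ 2 + c ^ 2))) ≤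
      ENNReal.ofReal (Real.exp (2 * δ * max η γmax)) *
        Vfin η βmin βnom γnom γmax Imax lam δ a b c :=
  finite_horizon_cost_lower_bound_general η βmin βnom γnom γmax Imax lam hη hβm hγn hlam a b c hX δ
end
end

section
/- Let x^eq ∈ E := {x ∈ X : x₂ = 0 and x₃ = 0} and let N(x^eq) be a neighborhood of x^eq such that: (A2) there exists ρ > 0 with V_∞(x) ≤ ρ ℓ*(x) for all x ∈ N(x^eq) ∩ X, and M := inf{ℓ*(x) : x ∈ X \ N(x^eq)} > 0; and (A3) for the prediction horizon T > 0 and constant C′ > 0 there exists C̄ > 0 with δ ℓ*(x) ≤ C̄ V_δ(x) for all δ ∈ (0, T] and all x with V_T(x) ≤ C′. Then for every δ ∈ (0, κ) with κ := max{C′/M, ρ}, there exists an integer N ≥ 1 and α ∈ [0,1) such that, with T = Nδ, for every x̌ with V_T(x̌) ≤ C′ and every control u* minimizing J_T(x̌, ·) over controls keeping the trajectory in X on [0, T]: V_T(x(δ; x̌, u*)) ≤ V_T(x̌) − (1 − α) ∫₀^δ ℓ(x(s; x̌, u*), u*(s)) ds. -/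
/-!
Cut the optimal trajectory on `[0, Nδ]` into `N` pieces of length `δ` with costs `Λ k`. By the
principle of optimality the tail cost from `kδ` is at most `V_{(N-k)δ}(x(kδ))`. Near the
equilibrium (A2) bounds it by `ρ ℓ*(x(kδ))`; away from it the tail is at most
`C' ≤ (C'/M) ℓ*(x(kδ))`; and (A3) turns `δ ℓ*(x(kδ))` into at most `C̄ Λ k`. So every tail is at
most `γ Λ k` with `γ = max 1 (κ C̄ / δ)`, and the tails decay like `(1 - 1/γ)^k`.

For `N` large this forces the last sample `x((N-1)δ)` into the neighbourhood, where (A2) bounds the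
cost of completing the horizon. Following the optimal control from `x(δ)` up to `(N-1)δ` then gives
`V_T(x(δ)) ≤ V_T(x̌) - Λ 0 + (γ - 1) Λ (N-1)`, and `(γ - 1) Λ (N-1) ≤ α Λ 0` for
`α = γ (γ - 1) (1 - 1/γ)^(N-1)`, which is `< 1` for `N` large.
-/

open MeasureTheory Set Filter Topology
open scoped ENNReal

noncomputable section

open intervalIntegral

theorem sum_Ico_le_pow_mul_sum_range {Λ : ℕ → ℝ} {γ : ℝ} {N : ℕ} (hγ : 1 ≤ γ)
    (htail : ∀ j < N, ∑ k ∈ Finset.Ico j N, Λ k ≤ γ * Λ j) :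
    ∀ j ≤ N, ∑ k ∈ Finset.Ico j N, Λ k ≤ (1 - γ⁻¹) ^ j * ∑ k ∈ Finset.range N, Λ k := by
  have hq : 0 ≤ 1 - γ⁻¹ := sub_nonneg.2 (inv_le_one_of_one_le₀ hγ)
  intro j
  induction j with
  | zero => intro _; rw [pow_zero, one_mul, Finset.range_eq_Ico]
  | succ j ih =>
    intro hj
    have hsplit := Finset.sum_eq_sum_Ico_succ_bot hj Λ
    have hΛj : γ⁻¹ * ∑ k ∈ Finset.Ico j N, Λ k ≤ Λ j := by
      rw [inv_mul_le_iff₀ (by linarith)]; exact htail j hj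
    calc ∑ k ∈ Finset.Ico (j + 1) N, Λ k ≤ (1 - γ⁻¹) * ∑ k ∈ Finset.Ico j N, Λ k := by
          linarith
      _ ≤ (1 - γ⁻¹) * ((1 - γ⁻¹) ^ j * ∑ k ∈ Finset.range N, Λ k) :=
          mul_le_mul_of_nonneg_left (ih (by omega)) hq
      _ = (1 - γ⁻¹) ^ (j + 1) * ∑ k ∈ Finset.range N, Λ k := by ring

theorem mul_le_mul_of_mul_le_of_mul_le {δ Cb c γ e Λ : ℝ} (hδ : 0 < δ) (hc : 0 ≤ c) (hΛ : 0 ≤ Λ)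
    (hcγ : c * Cb ≤ γ * δ) (h : δ * e ≤ Cb * Λ) : c * e ≤ γ * Λ := by
  refine le_of_mul_le_mul_left ?_ hδ
  calc δ * (c * e) = c * (δ * e) := by ring
    _ ≤ c * (Cb * Λ) := mul_le_mul_of_nonneg_left h hc
    _ = c * Cb * Λ := by ring
    _ ≤ γ * δ * Λ := mul_le_mul_of_nonneg_right hcγ hΛ
    _ = δ * (γ * Λ) := by ring

theorem sum_Ico_le_mul_of_near_or_far {Λ e : ℕ → ℝ} {near : ℕ → Prop} {N : ℕ}
    {δ Cb ρ M C' γ : ℝ} (hδ : 0 < δ) (hρ : 0 ≤ ρ) (hM : 0 < M) (hC' : 0 ≤ C')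
    (hργ : ρ * Cb ≤ γ * δ) (hCγ : C' / M * Cb ≤ γ * δ) (hΛ : ∀ k, 0 ≤ Λ k)
    (htotal : ∑ k ∈ Finset.range N, Λ k ≤ C')
    (hcost : ∀ j < N, δ * e j ≤ Cb * Λ j)
    (hfar : ∀ j < N, ¬ near j → M ≤ e j)
    (hnear : ∀ j < N, near j → ∑ k ∈ Finset.Ico j N, Λ k ≤ ρ * e j) :
    ∀ j < N, ∑ k ∈ Finset.Ico j N, Λ k ≤ γ * Λ j := by
  intro j hj
  by_cases hj_near : near j
  · exact (hnear j hj hj_near).trans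
      (mul_le_mul_of_mul_le_of_mul_le hδ hρ (hΛ j) hργ (hcost j hj))
  · calc ∑ k ∈ Finset.Ico j N, Λ k ≤ ∑ k ∈ Finset.range N, Λ k := by
          rw [Finset.range_eq_Ico]
          exact Finset.sum_le_sum_of_subset_of_nonneg (Finset.Ico_subset_Ico_left j.zero_le)
            fun k _ _ => hΛ k
      _ ≤ C' := htotal
      _ = C' / M * M := by field_simp
      _ ≤ C' / M * e j := mul_le_mul_of_nonneg_left (hfar j hj hj_near) (by positivity)
      _ ≤ γ * Λ j := mul_le_mul_of_mul_le_of_mul_le hδ (by positivity) (hΛ j) hCγ (hcost j hj)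

theorem relaxed_decrease_of_near_or_far {Λ e : ℕ → ℝ} {near : ℕ → Prop} {n : ℕ}
    {δ Cb ρ M C' γ : ℝ} (hδ : 0 < δ) (hρ : 0 ≤ ρ) (hM : 0 < M) (hC' : 0 ≤ C') (hγ : 1 ≤ γ)
    (hργ : ρ * Cb ≤ γ * δ) (hCγ : C' / M * Cb ≤ γ * δ) (hCb : 0 ≤ Cb) (hΛ : ∀ k, 0 ≤ Λ k)
    (hn : 1 ≤ n)
    (hsmall : Cb * C' * (1 - γ⁻¹) ^ n < δ * M)
    (htotal : ∑ k ∈ Finset.range (n + 1), Λ k ≤ C')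
    (hcost : ∀ j < n + 1, δ * e j ≤ Cb * Λ j)
    (hfar : ∀ j < n + 1, ¬ near j → M ≤ e j)
    (hnear : ∀ j < n + 1, near j → ∑ k ∈ Finset.Ico j (n + 1), Λ k ≤ ρ * e j) :
    near n ∧ ∑ k ∈ Finset.Ico 1 n, Λ k + ρ * e n + (1 - γ * (γ - 1) * (1 - γ⁻¹) ^ n) * Λ 0 ≤
      ∑ k ∈ Finset.range (n + 1), Λ k := by
  have htail := sum_Ico_le_mul_of_near_or_far hδ hρ hM hC' hργ hCγ hΛ htotal hcost hfar hnear
  have hdecay := sum_Ico_le_pow_mul_sum_range hγ htail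
  have hlast : Λ n ≤ (1 - γ⁻¹) ^ n * ∑ k ∈ Finset.range (n + 1), Λ k := by
    have h := hdecay n n.le_succ
    rwa [Nat.Ico_succ_singleton, Finset.sum_singleton] at h
  have hq : 0 ≤ (1 - γ⁻¹) ^ n := pow_nonneg (sub_nonneg.2 (inv_le_one_of_one_le₀ hγ)) n
  have hnear_n : near n := by
    by_contra hfar_n
    have hΛn : Λ n ≤ (1 - γ⁻¹) ^ n * C' := hlast.trans (mul_le_mul_of_nonneg_left htotal hq)
    have hδM : δ * M ≤ Cb * ((1 - γ⁻¹) ^ n * C') := calc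
      δ * M ≤ δ * e n := mul_le_mul_of_nonneg_left (hfar n n.lt_succ_self hfar_n) hδ.le
      _ ≤ Cb * Λ n := hcost n n.lt_succ_self
      _ ≤ Cb * ((1 - γ⁻¹) ^ n * C') := mul_le_mul_of_nonneg_left hΛn hCb
    linarith
  refine ⟨hnear_n, ?_⟩
  have hρe := mul_le_mul_of_mul_le_of_mul_le hδ hρ (hΛ n) hργ (hcost n n.lt_succ_self)
  have hfirst : ∑ k ∈ Finset.range (n + 1), Λ k ≤ γ * Λ 0 := by
    rw [Finset.range_eq_Ico]; exact htail 0 n.succ_pos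
  have hsplit : ∑ k ∈ Finset.range (n + 1), Λ k = Λ 0 + ∑ k ∈ Finset.Ico 1 n, Λ k + Λ n := by
    rw [Finset.range_eq_Ico, Finset.sum_eq_sum_Ico_succ_bot n.succ_pos, Finset.sum_Ico_succ_top hn,
      add_assoc]
  have hγΛn : (γ - 1) * Λ n ≤ γ * (γ - 1) * (1 - γ⁻¹) ^ n * Λ 0 := calc
    (γ - 1) * Λ n ≤ (γ - 1) * ((1 - γ⁻¹) ^ n * (γ * Λ 0)) :=
        mul_le_mul_of_nonneg_left (hlast.trans (mul_le_mul_of_nonneg_left hfirst hq)) (by linarith)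
    _ = γ * (γ - 1) * (1 - γ⁻¹) ^ n * Λ 0 := by ring
  linarith

theorem integrableOn_Icc_of_forall_mem_Icc {u : ℝ → ℝ} {lo hi : ℝ} (hu : Measurable u)
    (hbound : ∀ t, 0 ≤ t → u t ∈ Icc lo hi) (b : ℝ) : IntegrableOn u (Icc 0 b) :=
  Measure.integrableOn_of_bounded (M := max |lo| |hi|) measure_Icc_lt_top.ne
    hu.aestronglyMeasurable <| ae_restrict_of_forall_mem measurableSet_Icc fun t ht =>
      abs_le_max_abs_abs (hbound t ht.1).1 (hbound t ht.1).2

theorem intervalIntegrable_of_forall_integrableOn_Icc {g : ℝ → ℝ}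
    (hg : ∀ b, IntegrableOn g (Icc 0 b)) {a b : ℝ} (ha : 0 ≤ a) (hb : 0 ≤ b) :
    IntervalIntegrable g volume a b :=
  ((hg (max a b)).mono_set
    (uIcc_subset_Icc ⟨ha, le_max_left a b⟩ ⟨hb, le_max_right a b⟩)).intervalIntegrable

def concatAt (s : ℝ) (f g : ℝ → ℝ) : ℝ → ℝ := fun t => if t ≤ s then f t else g (t - s)

theorem integral_form_comp_add {x g : ℝ → ℝ}
    (hx : ∀ t, 0 ≤ t → x t = x 0 + ∫ r in (0:ℝ)..t, g r)
    (hg : ∀ b, IntegrableOn g (Icc 0 b)) {s : ℝ} (hs : 0 ≤ s) (t : ℝ) (ht : 0 ≤ t) :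
    x (t + s) = x (0 + s) + ∫ r in (0:ℝ)..t, g (r + s) := by
  have hadd := integral_add_adjacent_intervals
    (intervalIntegrable_of_forall_integrableOn_Icc hg le_rfl hs)
    (intervalIntegrable_of_forall_integrableOn_Icc hg hs (b := t + s) (by linarith))
  rw [zero_add, integral_comp_add_right, zero_add, hx (t + s) (by linarith), hx s hs, ← hadd]
  ring

theorem integral_form_concatAt {x z g h : ℝ → ℝ} {s : ℝ} (hs : 0 ≤ s)
    (hx : ∀ t, 0 ≤ t → x t = x 0 + ∫ r in (0:ℝ)..t, g r)
    (hz : ∀ t, 0 ≤ t → z t = z 0 + ∫ r in (0:ℝ)..t, h r) (hz0 : z 0 = x s)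
    (hg : ∀ b, IntegrableOn g (Icc 0 b)) (hh : ∀ b, IntegrableOn h (Icc 0 b))
    (t : ℝ) (ht : 0 ≤ t) :
    concatAt s x z t = concatAt s x z 0 + ∫ r in (0:ℝ)..t, concatAt s g h r := by
  have hint_eq {a b : ℝ} (hab : a ≤ b) (hb : b ≤ s) :
      ∫ r in a..b, concatAt s g h r = ∫ r in a..b, g r :=
    integral_congr fun r hr => if_pos (((uIcc_of_le hab).subset hr).2.trans hb)
  rw [show concatAt s x z 0 = x 0 from if_pos hs]
  rcases le_or_gt t s with hts | hst
  · rw [show concatAt s x z t = x t from if_pos hts, hint_eq ht hts, ← hx t ht]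
  have hint_eq' : ∫ r in s..t, concatAt s g h r = ∫ r in (0:ℝ)..(t - s), h r := by
    rw [← sub_self s, ← integral_comp_sub_right, integral_of_le hst.le, integral_of_le hst.le]
    exact setIntegral_congr_fun measurableSet_Ioc fun r hr => if_neg (not_le.2 hr.1)
  have hgs : IntervalIntegrable (concatAt s g h) volume 0 s :=
    (intervalIntegrable_congr fun r hr => (if_pos (uIoc_of_le hs ▸ hr).2).symm).mp
      (intervalIntegrable_of_forall_integrableOn_Icc hg le_rfl hs)
  have hhs : IntervalIntegrable (concatAt s g h) volume s t := by
    have := (intervalIntegrable_of_forall_integrableOn_Icc hh le_rfl (sub_nonneg.2 hst.le)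
      (a := 0)).comp_sub_right s
    rw [zero_add, sub_add_cancel] at this
    exact (intervalIntegrable_congr fun r hr =>
      (if_neg (not_le.2 (uIoc_of_le hst.le ▸ hr).1)).symm).mp this
  rw [show concatAt s x z t = z (t - s) from if_neg (not_le.2 hst),
    ← integral_add_adjacent_intervals hgs hhs,
    hint_eq hs le_rfl, hint_eq', hz (t - s) (by linarith), hz0, hx s hs]
  ring

theorem ContinuousOn.concatAt {x z : ℝ → ℝ} {s : ℝ} (hx : ContinuousOn x (Ici 0))
    (hz : ContinuousOn z (Ici 0)) (hz0 : z 0 = x s) : ContinuousOn (concatAt s x z) (Ici 0) := by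
  refine ContinuousOn.if (fun t ht => ?_) (hx.mono inter_subset_left) ?_
  · have hts : t = s := frontier_le_subset_eq continuous_id continuous_const ht.2
    rw [hts, sub_self, hz0]
  · refine hz.comp (continuousOn_id.sub continuousOn_const) fun t ht => mem_Ici.2 (sub_nonneg.2 ?_)
    exact closure_lt_subset_le (f := fun _ => s) (g := fun b => b) continuous_const
      continuous_id (by simpa only [not_le] using ht.2)

theorem setLIntegral_Ioc_comp_add_right (F : ℝ → ℝ≥0∞) (s t : ℝ) :
    ∫⁻ q in Ioc 0 t, F (q + s) = ∫⁻ q in Ioc s (s + t), F q := by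
  rw [(measurePreserving_add_right volume s).setLIntegral_comp_emb
    (measurableEmbedding_addRight s) F (Ioc 0 t), image_add_const_Ioc, zero_add, add_comm]

def costOn (lam βnom γnom : ℝ) (u₁ u₂ x₂ x₃ : ℝ → ℝ) (a b : ℝ) : ℝ≥0∞ :=
  ∫⁻ s in Ioc a b, ENNReal.ofReal (stageCost lam βnom γnom (x₂ s) (x₃ s) (u₁ s) (u₂ s))

section SEIR

variable {η βmin βnom γnom γmax Imax lam : ℝ} {u₁ u₂ x₁ x₂ x₃ : ℝ → ℝ}

theorem IsTraj.integrableOn_rhs (hc : IsCtrl βmin βnom γnom γmax u₁ u₂)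
    (ht : IsTraj η u₁ u₂ x₁ x₂ x₃) (b : ℝ) :
    IntegrableOn (fun s => -(u₁ s * x₁ s * x₃ s)) (Icc 0 b) ∧
    IntegrableOn (fun s => u₁ s * x₁ s * x₃ s - η * x₂ s) (Icc 0 b) ∧
    IntegrableOn (fun s => η * x₂ s - u₂ s * x₃ s) (Icc 0 b) := by
  have hsub : Icc (0:ℝ) b ⊆ Ici 0 := Icc_subset_Ici_self
  have hx₁ := ht.1.mono hsub
  have hx₂ := ht.2.1.mono hsub
  have hx₃ := ht.2.2.1.mono hsub
  have hu₁x : IntegrableOn (fun s => u₁ s * x₁ s * x₃ s) (Icc 0 b) := by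
    simpa only [Pi.mul_apply, mul_assoc] using
      (integrableOn_Icc_of_forall_mem_Icc hc.1 (fun t ht' => (hc.2.2 t ht').1) b
        |>.mul_continuousOn (hx₁.mul hx₃) isCompact_Icc)
  have hu₂x : IntegrableOn (fun s => u₂ s * x₃ s) (Icc 0 b) :=
    (integrableOn_Icc_of_forall_mem_Icc hc.2.1 (fun t ht' => (hc.2.2 t ht').2) b
      |>.mul_continuousOn hx₃ isCompact_Icc)
  have hηx : IntegrableOn (fun s => η * x₂ s) (Icc 0 b) :=
    (continuousOn_const.mul hx₂).integrableOn_compact isCompact_Icc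
  exact ⟨hu₁x.neg, hu₁x.sub hηx, hηx.sub hu₂x⟩

theorem IsCtrl.comp_add_const (hc : IsCtrl βmin βnom γnom γmax u₁ u₂) {s : ℝ} (hs : 0 ≤ s) :
    IsCtrl βmin βnom γnom γmax (fun t => u₁ (t + s)) (fun t => u₂ (t + s)) :=
  ⟨hc.1.comp (measurable_add_const s), hc.2.1.comp (measurable_add_const s),
    fun t ht => hc.2.2 (t + s) (by linarith)⟩

theorem IsTraj.comp_add_const (hc : IsCtrl βmin βnom γnom γmax u₁ u₂)
    (ht : IsTraj η u₁ u₂ x₁ x₂ x₃) {s : ℝ} (hs : 0 ≤ s) :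
    IsTraj η (fun t => u₁ (t + s)) (fun t => u₂ (t + s))
      (fun t => x₁ (t + s)) (fun t => x₂ (t + s)) (fun t => x₃ (t + s)) := by
  have hmaps : MapsTo (fun t : ℝ => t + s) (Ici 0) (Ici 0) := fun t (ht' : 0 ≤ t) =>
    show 0 ≤ t + s by linarith
  have hshift : ContinuousOn (fun t : ℝ => t + s) (Ici 0) := by fun_prop
  have hint := ht.integrableOn_rhs hc
  exact ⟨ht.1.comp hshift hmaps, ht.2.1.comp hshift hmaps, ht.2.2.1.comp hshift hmaps,
    integral_form_comp_add ht.2.2.2.1 (fun b => (hint b).1) hs,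
    integral_form_comp_add ht.2.2.2.2.1 (fun b => (hint b).2.1) hs,
    integral_form_comp_add ht.2.2.2.2.2 (fun b => (hint b).2.2) hs⟩

theorem IsCtrl.concatAt {w₁ w₂ : ℝ → ℝ} (hc : IsCtrl βmin βnom γnom γmax u₁ u₂)
    (hcw : IsCtrl βmin βnom γnom γmax w₁ w₂) (s : ℝ) :
    IsCtrl βmin βnom γnom γmax (concatAt s u₁ w₁) (concatAt s u₂ w₂) := by
  refine ⟨hc.1.ite measurableSet_Iic (hcw.1.comp (measurable_sub_const s)),
    hc.2.1.ite measurableSet_Iic (hcw.2.1.comp (measurable_sub_const s)), fun t ht => ?_⟩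
  by_cases hts : t ≤ s
  · simp only [_root_.concatAt, if_pos hts]; exact hc.2.2 t ht
  · simp only [_root_.concatAt, if_neg hts]; exact hcw.2.2 (t - s) (by linarith [not_le.1 hts])

theorem IsTraj.concatAt {w₁ w₂ z₁ z₂ z₃ : ℝ → ℝ} (hc : IsCtrl βmin βnom γnom γmax u₁ u₂)
    (ht : IsTraj η u₁ u₂ x₁ x₂ x₃) (hcw : IsCtrl βmin βnom γnom γmax w₁ w₂)
    (htz : IsTraj η w₁ w₂ z₁ z₂ z₃) {s : ℝ} (hs : 0 ≤ s)
    (h₁ : z₁ 0 = x₁ s) (h₂ : z₂ 0 = x₂ s) (h₃ : z₃ 0 = x₃ s) :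
    IsTraj η (concatAt s u₁ w₁) (concatAt s u₂ w₂)
      (concatAt s x₁ z₁) (concatAt s x₂ z₂) (concatAt s x₃ z₃) := by
  have hx := ht.integrableOn_rhs hc
  have hz := htz.integrableOn_rhs hcw
  refine ⟨ht.1.concatAt htz.1 h₁, ht.2.1.concatAt htz.2.1 h₂, ht.2.2.1.concatAt htz.2.2.1 h₃,
    fun t h => ?_, fun t h => ?_, fun t h => ?_⟩
  · convert integral_form_concatAt hs ht.2.2.2.1 htz.2.2.2.1 h₁ (fun b => (hx b).1)
      (fun b => (hz b).1) t h using 3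
    funext r; simp only [_root_.concatAt]; split_ifs <;> rfl
  · convert integral_form_concatAt hs ht.2.2.2.2.1 htz.2.2.2.2.1 h₂ (fun b => (hx b).2.1)
      (fun b => (hz b).2.1) t h using 3
    funext r; simp only [_root_.concatAt]; split_ifs <;> rfl
  · convert integral_form_concatAt hs ht.2.2.2.2.2 htz.2.2.2.2.2 h₃ (fun b => (hx b).2.2)
      (fun b => (hz b).2.2) t h using 3
    funext r; simp only [_root_.concatAt]; split_ifs <;> rfl

theorem costOn_comp_add_const (s t : ℝ) :
    costOn lam βnom γnom (fun q => u₁ (q + s)) (fun q => u₂ (q + s))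
      (fun q => x₂ (q + s)) (fun q => x₃ (q + s)) 0 t =
      costOn lam βnom γnom u₁ u₂ x₂ x₃ s (s + t) :=
  setLIntegral_Ioc_comp_add_right
    (fun q => ENNReal.ofReal (stageCost lam βnom γnom (x₂ q) (x₃ q) (u₁ q) (u₂ q))) s t

theorem costOn_add {a b c : ℝ} (hab : a ≤ b) (hbc : b ≤ c) :
    costOn lam βnom γnom u₁ u₂ x₂ x₃ a c =
      costOn lam βnom γnom u₁ u₂ x₂ x₃ a b + costOn lam βnom γnom u₁ u₂ x₂ x₃ b c := by
  rw [costOn, ← Ioc_union_Ioc_eq_Ioc hab hbc,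
    lintegral_union measurableSet_Ioc (Ioc_disjoint_Ioc_of_le le_rfl)]
  rfl

theorem costOn_nat_mul_eq_sum {δ : ℝ} (hδ : 0 ≤ δ) {j m : ℕ} (hjm : j ≤ m) :
    costOn lam βnom γnom u₁ u₂ x₂ x₃ (j * δ) (m * δ) =
      ∑ k ∈ Finset.Ico j m, costOn lam βnom γnom u₁ u₂ x₂ x₃ (k * δ) ((k + 1 : ℕ) * δ) := by
  induction m, hjm using Nat.le_induction with
  | base => simp [costOn]
  | succ m hjm ih =>
    rw [costOn_add (b := m * δ) (by gcongr) (by gcongr; omega), ih, Finset.sum_Ico_succ_top hjm]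

theorem costOn_concatAt {w₁ w₂ z₂ z₃ : ℝ → ℝ} {s r : ℝ} (hs : 0 ≤ s) (hr : 0 ≤ r) :
    costOn lam βnom γnom (concatAt s u₁ w₁) (concatAt s u₂ w₂)
      (concatAt s x₂ z₂) (concatAt s x₃ z₃) 0 (s + r) =
      costOn lam βnom γnom u₁ u₂ x₂ x₃ 0 s + costOn lam βnom γnom w₁ w₂ z₂ z₃ 0 r := by
  rw [costOn_add hs (by linarith), ← costOn_comp_add_const]
  congr 1
  · refine setLIntegral_congr_fun measurableSet_Ioc fun q hq => ?_
    simp only [concatAt, if_pos hq.2]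
  · refine setLIntegral_congr_fun measurableSet_Ioc fun q hq => ?_
    simp only [concatAt, if_neg (not_le.2 (lt_add_of_pos_left s hq.1)), add_sub_cancel_right]

theorem vfin_le_costOn (hc : IsCtrl βmin βnom γnom γmax u₁ u₂) (ht : IsTraj η u₁ u₂ x₁ x₂ x₃)
    {T : ℝ} (hX : ∀ t ∈ Icc (0:ℝ) T, InX Imax (x₁ t) (x₂ t) (x₃ t)) :
    Vfin η βmin βnom γnom γmax Imax lam T (x₁ 0) (x₂ 0) (x₃ 0) ≤
      costOn lam βnom γnom u₁ u₂ x₂ x₃ 0 T :=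
  sInf_le ⟨u₁, u₂, x₁, x₂, x₃, hc, ht, rfl, rfl, rfl, hX, rfl⟩

theorem vfin_le_vinf (T a b c : ℝ) :
    Vfin η βmin βnom γnom γmax Imax lam T a b c ≤ Vinf η βmin βnom γnom γmax Imax lam a b c := by
  refine le_sInf ?_
  rintro _ ⟨u₁, u₂, x₁, x₂, x₃, hc, ht, rfl, rfl, rfl, hX, rfl⟩
  exact (vfin_le_costOn hc ht fun t h => hX t h.1).trans (lintegral_mono_set Ioc_subset_Ioi_self)

theorem vfin_shift_le_costOn (hc : IsCtrl βmin βnom γnom γmax u₁ u₂)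
    (ht : IsTraj η u₁ u₂ x₁ x₂ x₃) {s t : ℝ} (hs : 0 ≤ s)
    (hX : ∀ q ∈ Icc (0:ℝ) (s + t), InX Imax (x₁ q) (x₂ q) (x₃ q)) :
    Vfin η βmin βnom γnom γmax Imax lam t (x₁ s) (x₂ s) (x₃ s) ≤
      costOn lam βnom γnom u₁ u₂ x₂ x₃ s (s + t) := by
  have h := vfin_le_costOn (lam := lam) (hc.comp_add_const hs) (ht.comp_add_const hc hs)
    (T := t) fun q hq => hX (q + s) ⟨by linarith [hq.1], by linarith [hq.2]⟩
  rwa [costOn_comp_add_const, zero_add] at h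

theorem vfin_le_costOn_add_vfin (hc : IsCtrl βmin βnom γnom γmax u₁ u₂)
    (ht : IsTraj η u₁ u₂ x₁ x₂ x₃) {s r : ℝ} (hs : 0 ≤ s) (hr : 0 ≤ r)
    (hX : ∀ q ∈ Icc (0:ℝ) s, InX Imax (x₁ q) (x₂ q) (x₃ q)) :
    Vfin η βmin βnom γnom γmax Imax lam (s + r) (x₁ 0) (x₂ 0) (x₃ 0) ≤
      costOn lam βnom γnom u₁ u₂ x₂ x₃ 0 s +
        Vfin η βmin βnom γnom γmax Imax lam r (x₁ s) (x₂ s) (x₃ s) := by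
  rw [add_comm (costOn lam βnom γnom u₁ u₂ x₂ x₃ 0 s)]
  unfold Vfin
  rw [ENNReal.sInf_add]
  refine le_iInf₂ ?_
  rintro _ ⟨w₁, w₂, z₁, z₂, z₃, hcw, htz, h₁, h₂, h₃, hXz, rfl⟩
  have hX' : ∀ q ∈ Icc (0:ℝ) (s + r),
      InX Imax (concatAt s x₁ z₁ q) (concatAt s x₂ z₂ q) (concatAt s x₃ z₃ q) := by
    intro q hq
    by_cases hqs : q ≤ s
    · simp only [concatAt, if_pos hqs]; exact hX q ⟨hq.1, hqs⟩
    · simp only [concatAt, if_neg hqs]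
      exact hXz (q - s) ⟨by linarith [not_le.1 hqs], by linarith [hq.2]⟩
  have h := vfin_le_costOn (lam := lam) (hc.concatAt hcw s)
    (ht.concatAt hc hcw htz hs h₁ h₂ h₃) hX'
  simp only [concatAt, if_pos hs] at h
  exact (h.trans_eq (costOn_concatAt hs hr)).trans_eq (add_comm _ _)

theorem vfin_shift_le_costOn_add_vfin (hc : IsCtrl βmin βnom γnom γmax u₁ u₂)
    (ht : IsTraj η u₁ u₂ x₁ x₂ x₃) {s t r : ℝ} (hs : 0 ≤ s) (hst : s ≤ t) (hr : 0 ≤ r)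
    (hX : ∀ q ∈ Icc (0:ℝ) t, InX Imax (x₁ q) (x₂ q) (x₃ q)) :
    Vfin η βmin βnom γnom γmax Imax lam (t - s + r) (x₁ s) (x₂ s) (x₃ s) ≤
      costOn lam βnom γnom u₁ u₂ x₂ x₃ s t +
        Vfin η βmin βnom γnom γmax Imax lam r (x₁ t) (x₂ t) (x₃ t) := by
  have h := vfin_le_costOn_add_vfin (lam := lam) (hc.comp_add_const hs) (ht.comp_add_const hc hs)
    (sub_nonneg.2 hst) hr fun q hq => hX (q + s) ⟨by linarith [hq.1], by linarith [hq.2]⟩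
  rwa [costOn_comp_add_const, zero_add, sub_add_cancel, add_sub_cancel] at h

theorem costOn_le_vfin_of_optimal (hc : IsCtrl βmin βnom γnom γmax u₁ u₂)
    (ht : IsTraj η u₁ u₂ x₁ x₂ x₃) {T s : ℝ}
    (hX : ∀ t ∈ Icc (0:ℝ) T, InX Imax (x₁ t) (x₂ t) (x₃ t))
    (hopt : costOn lam βnom γnom u₁ u₂ x₂ x₃ 0 T =
      Vfin η βmin βnom γnom γmax Imax lam T (x₁ 0) (x₂ 0) (x₃ 0))
    (hfin : costOn lam βnom γnom u₁ u₂ x₂ x₃ 0 T ≠ ⊤) (hs : 0 ≤ s) (hsT : s ≤ T) :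
    costOn lam βnom γnom u₁ u₂ x₂ x₃ s T ≤
      Vfin η βmin βnom γnom γmax Imax lam (T - s) (x₁ s) (x₂ s) (x₃ s) := by
  have hglue := vfin_le_costOn_add_vfin (lam := lam) hc ht hs (sub_nonneg.2 hsT)
    fun q hq => hX q ⟨hq.1, hq.2.trans hsT⟩
  rw [add_sub_cancel, ← hopt, costOn_add hs hsT] at hglue
  rw [costOn_add hs hsT] at hfin
  exact (ENNReal.add_le_add_iff_left (ENNReal.add_ne_top.1 hfin).1).1 hglue

theorem costOn_nat_mul_eq_ofReal_sum {δ : ℝ} (hδ : 0 ≤ δ) {N j m : ℕ}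
    (hfin : costOn lam βnom γnom u₁ u₂ x₂ x₃ 0 (N * δ) ≠ ⊤) (hjm : j ≤ m) (hmN : m ≤ N) :
    costOn lam βnom γnom u₁ u₂ x₂ x₃ (j * δ) (m * δ) = ENNReal.ofReal (∑ k ∈ Finset.Ico j m,
      (costOn lam βnom γnom u₁ u₂ x₂ x₃ (k * δ) ((k + 1 : ℕ) * δ)).toReal) := by
  rw [costOn_nat_mul_eq_sum hδ hjm,
    ENNReal.ofReal_sum_of_nonneg fun k _ => ENNReal.toReal_nonneg]
  refine Finset.sum_congr rfl fun k hk =>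
    (ENNReal.ofReal_toReal (ne_top_of_le_ne_top hfin ?_)).symm
  rw [Finset.mem_Ico] at hk
  exact lintegral_mono_set (Ioc_subset_Ioc (by positivity) (by gcongr; omega))

theorem ofReal_mul_ellStar_le_costOn {δ Cb C' : ℝ}
    (hA3 : ∀ p : ℝ × ℝ × ℝ,
      Vfin η βmin βnom γnom γmax Imax lam δ p.1 p.2.1 p.2.2 ≤ ENNReal.ofReal C' →
      ENNReal.ofReal (δ * (lam * (p.2.1 ^ 2 + p.2.2 ^ 2))) ≤
        ENNReal.ofReal Cb * Vfin η βmin βnom γnom γmax Imax lam δ p.1 p.2.1 p.2.2)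
    (hc : IsCtrl βmin βnom γnom γmax u₁ u₂) (ht : IsTraj η u₁ u₂ x₁ x₂ x₃) {s : ℝ} (hs : 0 ≤ s)
    (hX : ∀ q ∈ Icc (0:ℝ) (s + δ), InX Imax (x₁ q) (x₂ q) (x₃ q))
    (hC' : costOn lam βnom γnom u₁ u₂ x₂ x₃ s (s + δ) ≤ ENNReal.ofReal C') :
    ENNReal.ofReal (δ * (lam * (x₂ s ^ 2 + x₃ s ^ 2))) ≤
      ENNReal.ofReal Cb * costOn lam βnom γnom u₁ u₂ x₂ x₃ s (s + δ) := by
  have hV := vfin_shift_le_costOn (lam := lam) hc ht hs hX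
  exact (hA3 (x₁ s, x₂ s, x₃ s) (hV.trans hC')).trans (mul_le_mul_right hV _)

theorem relaxed_lyapunov_of_optimal {Nbhd : Set (ℝ × ℝ × ℝ)} {ρ M C' δ Cb γ : ℝ} {n : ℕ}
    (hlam : 0 ≤ lam) (hρ : 0 ≤ ρ) (hM : 0 < M) (hC' : 0 ≤ C') (hδ : 0 < δ) (hCb : 0 ≤ Cb)
    (hγ : 1 ≤ γ) (hργ : ρ * Cb ≤ γ * δ) (hCγ : C' / M * Cb ≤ γ * δ) (hn : 1 ≤ n)
    (hsmall : Cb * C' * (1 - γ⁻¹) ^ n < δ * M) (hα : γ * (γ - 1) * (1 - γ⁻¹) ^ n ≤ 1)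
    (hA2 : ∀ p : ℝ × ℝ × ℝ, p ∈ Nbhd → InX Imax p.1 p.2.1 p.2.2 →
      Vinf η βmin βnom γnom γmax Imax lam p.1 p.2.1 p.2.2 ≤
        ENNReal.ofReal (ρ * (lam * (p.2.1 ^ 2 + p.2.2 ^ 2))))
    (hfar : ∀ p : ℝ × ℝ × ℝ, InX Imax p.1 p.2.1 p.2.2 → p ∉ Nbhd →
      M ≤ lam * (p.2.1 ^ 2 + p.2.2 ^ 2))
    (hA3 : ∀ p : ℝ × ℝ × ℝ,
      Vfin η βmin βnom γnom γmax Imax lam δ p.1 p.2.1 p.2.2 ≤ ENNReal.ofReal C' →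
      ENNReal.ofReal (δ * (lam * (p.2.1 ^ 2 + p.2.2 ^ 2))) ≤
        ENNReal.ofReal Cb * Vfin η βmin βnom γnom γmax Imax lam δ p.1 p.2.1 p.2.2)
    (hc : IsCtrl βmin βnom γnom γmax u₁ u₂) (ht : IsTraj η u₁ u₂ x₁ x₂ x₃)
    (hX : ∀ t ∈ Icc (0:ℝ) ((n + 1 : ℕ) * δ), InX Imax (x₁ t) (x₂ t) (x₃ t))
    (hopt : costOn lam βnom γnom u₁ u₂ x₂ x₃ 0 ((n + 1 : ℕ) * δ) =
      Vfin η βmin βnom γnom γmax Imax lam ((n + 1 : ℕ) * δ) (x₁ 0) (x₂ 0) (x₃ 0))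
    (hVC : Vfin η βmin βnom γnom γmax Imax lam ((n + 1 : ℕ) * δ) (x₁ 0) (x₂ 0) (x₃ 0) ≤
      ENNReal.ofReal C') :
    Vfin η βmin βnom γnom γmax Imax lam ((n + 1 : ℕ) * δ) (x₁ δ) (x₂ δ) (x₃ δ) +
        ENNReal.ofReal (1 - γ * (γ - 1) * (1 - γ⁻¹) ^ n) *
          costOn lam βnom γnom u₁ u₂ x₂ x₃ 0 δ ≤
      Vfin η βmin βnom γnom γmax Imax lam ((n + 1 : ℕ) * δ) (x₁ 0) (x₂ 0) (x₃ 0) := by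
  set N := n + 1 with hN
  set α := γ * (γ - 1) * (1 - γ⁻¹) ^ n
  set Λ : ℕ → ℝ := fun k => (costOn lam βnom γnom u₁ u₂ x₂ x₃ (k * δ) ((k + 1 : ℕ) * δ)).toReal
  set e : ℕ → ℝ := fun j => lam * (x₂ (j * δ) ^ 2 + x₃ (j * δ) ^ 2)
  have he (j : ℕ) : 0 ≤ e j := mul_nonneg hlam (by positivity)
  have hΛ0 (k : ℕ) : 0 ≤ Λ k := ENNReal.toReal_nonneg
  have hfin : costOn lam βnom γnom u₁ u₂ x₂ x₃ 0 (N * δ) ≠ ⊤ :=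
    hopt ▸ ne_top_of_le_ne_top ENNReal.ofReal_ne_top hVC
  have hsum {j m : ℕ} (hjm : j ≤ m) (hmN : m ≤ N) :
      costOn lam βnom γnom u₁ u₂ x₂ x₃ (j * δ) (m * δ) =
        ENNReal.ofReal (∑ k ∈ Finset.Ico j m, Λ k) :=
    costOn_nat_mul_eq_ofReal_sum hδ.le hfin hjm hmN
  have hXj {j : ℕ} (hj : j ≤ N) : ∀ t ∈ Icc (0:ℝ) (j * δ), InX Imax (x₁ t) (x₂ t) (x₃ t) :=
    fun t ht => hX t ⟨ht.1, ht.2.trans (by gcongr)⟩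
  have hsample {j : ℕ} (hj : j ≤ N) : InX Imax (x₁ (j * δ)) (x₂ (j * δ)) (x₃ (j * δ)) :=
    hXj hj _ ⟨by positivity, le_rfl⟩
  have hV : Vfin η βmin βnom γnom γmax Imax lam (N * δ) (x₁ 0) (x₂ 0) (x₃ 0) =
      ENNReal.ofReal (∑ k ∈ Finset.range N, Λ k) := by
    rw [← hopt, Finset.range_eq_Ico, ← hsum N.zero_le le_rfl, Nat.cast_zero, zero_mul]
  have htotal : ∑ k ∈ Finset.range N, Λ k ≤ C' := (ENNReal.ofReal_le_ofReal_iff hC').1 (hV ▸ hVC)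
  have hcost (j : ℕ) (hj : j < N) : δ * e j ≤ Cb * Λ j := by
    have hstep : (j : ℝ) * δ + δ = ((j + 1 : ℕ) : ℝ) * δ := by push_cast; ring
    have hΛj : costOn lam βnom γnom u₁ u₂ x₂ x₃ (j * δ) (j * δ + δ) = ENNReal.ofReal (Λ j) := by
      simpa [hstep] using hsum j.le_succ hj
    have hΛC : Λ j ≤ C' :=
      (Finset.single_le_sum (fun k _ => hΛ0 k) (Finset.mem_range.2 hj)).trans htotal
    have h := ofReal_mul_ellStar_le_costOn hA3 hc ht (by positivity) (hstep ▸ hXj hj)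
      (hΛj ▸ ENNReal.ofReal_le_ofReal hΛC)
    rw [hΛj, ← ENNReal.ofReal_mul hCb] at h
    exact (ENNReal.ofReal_le_ofReal_iff (by positivity)).1 h
  have hnear (j : ℕ) (hj : j < N) (hjN : (x₁ (j * δ), x₂ (j * δ), x₃ (j * δ)) ∈ Nbhd) :
      ∑ k ∈ Finset.Ico j N, Λ k ≤ ρ * e j := by
    refine (ENNReal.ofReal_le_ofReal_iff (mul_nonneg hρ (he j))).1 ?_
    rw [← hsum hj.le le_rfl]
    exact (costOn_le_vfin_of_optimal hc ht hX hopt hfin (by positivity) (by gcongr)).trans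
      ((vfin_le_vinf _ _ _ _).trans (hA2 _ hjN (hsample hj.le)))
  obtain ⟨hnear_n, hdecrease⟩ := relaxed_decrease_of_near_or_far hδ hρ hM hC' hγ hργ hCγ hCb
    hΛ0 hn hsmall htotal hcost (fun j hj => hfar _ (hsample hj.le)) hnear
  have hglue := vfin_shift_le_costOn_add_vfin (lam := lam) (r := 2 * δ) hc ht hδ.le
    (by nlinarith [(Nat.one_le_cast (α := ℝ)).2 hn]) (by positivity) (hXj (j := n) (by omega))
  rw [show (n : ℝ) * δ - δ + 2 * δ = N * δ by rw [hN]; push_cast; ring,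
    show costOn lam βnom γnom u₁ u₂ x₂ x₃ δ (n * δ) = _ by simpa using hsum hn (by omega)] at hglue
  have hlast : Vfin η βmin βnom γnom γmax Imax lam (2 * δ) (x₁ (n * δ)) (x₂ (n * δ)) (x₃ (n * δ))
      ≤ ENNReal.ofReal (ρ * e n) :=
    (vfin_le_vinf _ _ _ _).trans (hA2 _ hnear_n (hsample (by omega)))
  have hfirst : costOn lam βnom γnom u₁ u₂ x₂ x₃ 0 δ = ENNReal.ofReal (Λ 0) := by
    simpa using hsum (j := 0) (m := 1) zero_le_one (by omega)
  calc _ ≤ ENNReal.ofReal (∑ k ∈ Finset.Ico 1 n, Λ k) + ENNReal.ofReal (ρ * e n) +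
        ENNReal.ofReal (1 - α) * ENNReal.ofReal (Λ 0) := by
        rw [hfirst]; gcongr; exact hglue.trans (by gcongr)
    _ = ENNReal.ofReal (∑ k ∈ Finset.Ico 1 n, Λ k + ρ * e n + (1 - α) * Λ 0) := by
        rw [ENNReal.ofReal_add (by positivity) (by nlinarith [hΛ0 0]),
          ENNReal.ofReal_add (by positivity) (mul_nonneg hρ (he n)),
          ENNReal.ofReal_mul (p := 1 - α) (by linarith)]
    _ ≤ _ := hV ▸ ENNReal.ofReal_le_ofReal hdecrease

end SEIR

theorem relaxed_Lyapunov_from_A1_A2_A3_general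
    (η βmin βnom γnom γmax Imax lam : ℝ)
    (hlam : lam ∈ Ioc (0:ℝ) 1)
    -- the neighbourhood N(x^eq)
    (Nbhd : Set (ℝ × ℝ × ℝ))
    -- (A2): local cost controllability
    (ρ : ℝ) (hρ : 0 < ρ)
    (hA2 : ∀ p : ℝ × ℝ × ℝ, p ∈ Nbhd → InX Imax p.1 p.2.1 p.2.2 →
      Vinf η βmin βnom γnom γmax Imax lam p.1 p.2.1 p.2.2 ≤
        ENNReal.ofReal (ρ * (lam * (p.2.1 ^ 2 + p.2.2 ^ 2))))
    -- M := inf {ℓ*(x) : x ∈ X \ N(x^eq)} > 0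
    (M : ℝ)
    (hMdef : M = sInf ((fun p : ℝ × ℝ × ℝ => lam * (p.2.1 ^ 2 + p.2.2 ^ 2)) ''
      {p : ℝ × ℝ × ℝ | InX Imax p.1 p.2.1 p.2.2 ∧ p ∉ Nbhd}))
    (hMpos : 0 < M)
    (C' : ℝ) (hC' : 0 < C')
    -- (A3): δ ℓ*(x) ≤ C̄ V_δ(x) on the sublevel set {V_T ≤ C'}
    (hA3 : ∀ T : ℝ, 0 < T → ∃ Cbar : ℝ, 0 < Cbar ∧
      ∀ δ : ℝ, δ ∈ Ioc (0:ℝ) T → ∀ p : ℝ × ℝ × ℝ,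
        Vfin η βmin βnom γnom γmax Imax lam T p.1 p.2.1 p.2.2 ≤ ENNReal.ofReal C' →
        ENNReal.ofReal (δ * (lam * (p.2.1 ^ 2 + p.2.2 ^ 2))) ≤
          ENNReal.ofReal Cbar *
            Vfin η βmin βnom γnom γmax Imax lam δ p.1 p.2.1 p.2.2)
    -- the control horizon δ ∈ (0, κ), κ = max {C'/M, ρ}
    (δ : ℝ) (hδ : 0 < δ) :
    ∃ N : ℕ, 1 ≤ N ∧ ∃ α : ℝ, α ∈ Ico (0:ℝ) 1 ∧
      ∀ a b c : ℝ,
        Vfin η βmin βnom γnom γmax Imax lam ((N : ℝ) * δ) a b c ≤ ENNReal.ofReal C' →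
        ∀ u₁ u₂ x₁ x₂ x₃ : ℝ → ℝ,
          IsCtrl βmin βnom γnom γmax u₁ u₂ →
          IsTraj η u₁ u₂ x₁ x₂ x₃ →
          x₁ 0 = a → x₂ 0 = b → x₃ 0 = c →
          (∀ t ∈ Icc (0:ℝ) ((N : ℝ) * δ), InX Imax (x₁ t) (x₂ t) (x₃ t)) →
          (∫⁻ s in Ioc (0:ℝ) ((N : ℝ) * δ),
              ENNReal.ofReal (stageCost lam βnom γnom (x₂ s) (x₃ s) (u₁ s) (u₂ s)))
            = Vfin η βmin βnom γnom γmax Imax lam ((N : ℝ) * δ) a b c →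
          (Vfin η βmin βnom γnom γmax Imax lam ((N : ℝ) * δ) (x₁ δ) (x₂ δ) (x₃ δ) +
              ENNReal.ofReal (1 - α) *
                ∫⁻ s in Ioc (0:ℝ) δ,
                  ENNReal.ofReal (stageCost lam βnom γnom (x₂ s) (x₃ s) (u₁ s) (u₂ s)))
            ≤ Vfin η βmin βnom γnom γmax Imax lam ((N : ℝ) * δ) a b c := by
  -- (A3) at horizon `δ` suffices: each sample has `V_δ(x(kδ)) ≤ Λ k ≤ V_T(x̌) ≤ C'`.
  obtain ⟨Cb, hCb, hA3δ⟩ := hA3 δ hδ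
  have hfar (p : ℝ × ℝ × ℝ) (hpX : InX Imax p.1 p.2.1 p.2.2) (hpN : p ∉ Nbhd) :
      M ≤ lam * (p.2.1 ^ 2 + p.2.2 ^ 2) :=
    hMdef ▸ csInf_le ⟨0, by rintro _ ⟨q, -, rfl⟩; exact mul_nonneg hlam.1.le (by positivity)⟩
      ⟨p, ⟨hpX, hpN⟩, rfl⟩
  set κ := max (C' / M) ρ
  set γ := max 1 (κ * Cb / δ)
  have hγ : 1 ≤ γ := le_max_left _ _
  have hκγ : κ * Cb ≤ γ * δ := (div_le_iff₀ hδ).1 (le_max_right _ _)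
  have hq : Tendsto (fun n => (1 - γ⁻¹) ^ n) atTop (𝓝 0) :=
    tendsto_pow_atTop_nhds_zero_of_lt_one (sub_nonneg.2 (inv_le_one_of_one_le₀ hγ))
      (sub_lt_self 1 (inv_pos.2 (by positivity)))
  have hα_ev : ∀ᶠ n in atTop, γ * (γ - 1) * (1 - γ⁻¹) ^ n < 1 :=
    (hq.const_mul _).eventually_lt_const (by rw [mul_zero]; exact one_pos)
  have hsmall_ev : ∀ᶠ n in atTop, Cb * C' * (1 - γ⁻¹) ^ n < δ * M :=
    (hq.const_mul _).eventually_lt_const (by rw [mul_zero]; positivity)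
  obtain ⟨n, hn, hα, hsmall⟩ := ((eventually_ge_atTop 1).and (hα_ev.and hsmall_ev)).exists
  refine ⟨n + 1, by omega, γ * (γ - 1) * (1 - γ⁻¹) ^ n, ⟨?_, hα⟩, ?_⟩
  · exact mul_nonneg (mul_nonneg (by positivity) (by linarith))
      (pow_nonneg (sub_nonneg.2 (inv_le_one_of_one_le₀ hγ)) n)
  rintro _ _ _ hVC u₁ u₂ x₁ x₂ x₃ hc ht rfl rfl rfl hX hopt
  exact relaxed_lyapunov_of_optimal hlam.1.le hρ.le hMpos hC'.le hδ hCb.le hγ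
    ((mul_le_mul_of_nonneg_right (le_max_right _ _) hCb.le).trans hκγ)
    ((mul_le_mul_of_nonneg_right (le_max_left _ _) hCb.le).trans hκγ) hn hsmall hα.le hA2 hfar
    (fun p => hA3δ δ ⟨hδ, le_rfl⟩ p) hc ht hX hopt hVC

/-- abstract MPC theorem — under local cost controllability (A2)
around an equilibrium `x^eq ∈ E` (with `M = inf ℓ* over X \ N(x^eq)` positive)
and the bound (A3), for every control horizon `δ ∈ (0, κ)`, `κ = max{C'/M, ρ}`,
there are `N ≥ 1` and `α ∈ [0,1)` such that, with `T = Nδ`, the relaxed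
Lyapunov inequality holds along optimal controls from every state in the
sublevel set `{V_T ≤ C'}`. -/
theorem relaxed_Lyapunov_from_A1_A2_A3
    (η βmin βnom γnom γmax Imax lam : ℝ)
    (hη : 0 < η) (hβm : 0 < βmin) (hβ : βmin < βnom)
    (hγn : 0 < γnom) (hγ : γnom < γmax) (hIm : 0 < Imax) (hIm1 : Imax ≤ 1)
    (hlam : lam ∈ Ioc (0:ℝ) 1)
    -- the equilibrium x^eq ∈ E
    (xeq : ℝ × ℝ × ℝ) (hxeqX : InX Imax xeq.1 xeq.2.1 xeq.2.2)
    (hxeq2 : xeq.2.1 = 0) (hxeq3 : xeq.2.2 = 0)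
    -- the neighbourhood N(x^eq)
    (Nbhd : Set (ℝ × ℝ × ℝ)) (hNbhd : Nbhd ∈ 𝓝 xeq)
    -- (A2): local cost controllability
    (ρ : ℝ) (hρ : 0 < ρ)
    (hA2 : ∀ p : ℝ × ℝ × ℝ, p ∈ Nbhd → InX Imax p.1 p.2.1 p.2.2 →
      Vinf η βmin βnom γnom γmax Imax lam p.1 p.2.1 p.2.2 ≤
        ENNReal.ofReal (ρ * (lam * (p.2.1 ^ 2 + p.2.2 ^ 2))))
    -- M := inf {ℓ*(x) : x ∈ X \ N(x^eq)} > 0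
    (M : ℝ)
    (hMdef : M = sInf ((fun p : ℝ × ℝ × ℝ => lam * (p.2.1 ^ 2 + p.2.2 ^ 2)) ''
      {p : ℝ × ℝ × ℝ | InX Imax p.1 p.2.1 p.2.2 ∧ p ∉ Nbhd}))
    (hMpos : 0 < M)
    (C' : ℝ) (hC' : 0 < C')
    -- (A3): δ ℓ*(x) ≤ C̄ V_δ(x) on the sublevel set {V_T ≤ C'}
    (hA3 : ∀ T : ℝ, 0 < T → ∃ Cbar : ℝ, 0 < Cbar ∧
      ∀ δ : ℝ, δ ∈ Ioc (0:ℝ) T → ∀ p : ℝ × ℝ × ℝ,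
        Vfin η βmin βnom γnom γmax Imax lam T p.1 p.2.1 p.2.2 ≤ ENNReal.ofReal C' →
        ENNReal.ofReal (δ * (lam * (p.2.1 ^ 2 + p.2.2 ^ 2))) ≤
          ENNReal.ofReal Cbar *
            Vfin η βmin βnom γnom γmax Imax lam δ p.1 p.2.1 p.2.2)
    -- the control horizon δ ∈ (0, κ), κ = max {C'/M, ρ}
    (δ : ℝ) (hδ : 0 < δ) (hδκ : δ < max (C' / M) ρ) :
    ∃ N : ℕ, 1 ≤ N ∧ ∃ α : ℝ, α ∈ Ico (0:ℝ) 1 ∧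
      ∀ a b c : ℝ,
        Vfin η βmin βnom γnom γmax Imax lam ((N : ℝ) * δ) a b c ≤ ENNReal.ofReal C' →
        ∀ u₁ u₂ x₁ x₂ x₃ : ℝ → ℝ,
          IsCtrl βmin βnom γnom γmax u₁ u₂ →
          IsTraj η u₁ u₂ x₁ x₂ x₃ →
          x₁ 0 = a → x₂ 0 = b → x₃ 0 = c →
          (∀ t ∈ Icc (0:ℝ) ((N : ℝ) * δ), InX Imax (x₁ t) (x₂ t) (x₃ t)) →
          (∫⁻ s in Ioc (0:ℝ) ((N : ℝ) * δ),
              ENNReal.ofReal (stageCost lam βnom γnom (x₂ s) (x₃ s) (u₁ s) (u₂ s)))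
            = Vfin η βmin βnom γnom γmax Imax lam ((N : ℝ) * δ) a b c →
          (Vfin η βmin βnom γnom γmax Imax lam ((N : ℝ) * δ) (x₁ δ) (x₂ δ) (x₃ δ) +
              ENNReal.ofReal (1 - α) *
                ∫⁻ s in Ioc (0:ℝ) δ,
                  ENNReal.ofReal (stageCost lam βnom γnom (x₂ s) (x₃ s) (u₁ s) (u₂ s)))
            ≤ Vfin η βmin βnom γnom γmax Imax lam ((N : ℝ) * δ) a b c :=
  relaxed_Lyapunov_from_A1_A2_A3_general η βmin βnom γnom γmax Imax lam hlam Nbhd ρ hρ hA2 M hMdef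
    hMpos C' hC' hA3 δ hδ
end
end
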